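/- arXiv:1409.2140 — 14 statements merged into one kernel-verified Lean document; each statement's English description precedes it below -/
import Mathlib

section
/- Let H(s) = C(sE − A)⁻¹B + D be a transfer function with E, A ∈ ℂⁿˣⁿ, B ∈ ℂⁿˣᵐ, C ∈ ℂᵖˣⁿ, D ∈ ℂᵖˣᵐ. Let V, W ∈ ℂⁿˣʳ and define E_r = WᵀEV, A_r = WᵀAV, B_r = WᵀB, C_r = CV, D_r = D, and H_r(s) = C_r(sE_r − A_r)⁻¹B_r + D_r. Let σ ∈ ℂ be such that σE − A and σE_r − A_r are invertible, and let r ∈ ℂᵐ be a nonzero vector. If (σE − A)⁻¹Br lies in the column space of V, then H(σ)r = H_r(σ)r. -/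
open Matrix
open scoped Matrix

/-- Right tangential interpolation by Petrov-Galerkin projection:
if `(σE - A)⁻¹ B r` lies in the column space of `V`, then the reduced
transfer function matches the full one at `σ` along the right direction `r`. -/
theorem right_tangential_interpolation
    {n m p r : ℕ}
    (E A : Matrix (Fin n) (Fin n) ℂ) (B : Matrix (Fin n) (Fin m) ℂ)
    (C : Matrix (Fin p) (Fin n) ℂ) (D : Matrix (Fin p) (Fin m) ℂ)
    (V W : Matrix (Fin n) (Fin r) ℂ)
    (σ : ℂ)
    (hσ : IsUnit (σ • E - A).det)
    (hσr : IsUnit (σ • (Wᵀ * E * V) - Wᵀ * A * V).det)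
    (rdir : Fin m → ℂ) (hrdir : rdir ≠ 0)
    (hran : ∃ c : Fin r → ℂ, V *ᵥ c = (σ • E - A)⁻¹ *ᵥ (B *ᵥ rdir)) :
    (C * (σ • E - A)⁻¹ * B + D) *ᵥ rdir
      = ((C * V) * (σ • (Wᵀ * E * V) - Wᵀ * A * V)⁻¹ * (Wᵀ * B) + D) *ᵥ rdir := by
  set K := σ • E - A with hKdef
  have hKr : σ • (Wᵀ * E * V) - Wᵀ * A * V = Wᵀ * K * V := by
    simp [hKdef, Matrix.mul_sub, Matrix.sub_mul, Matrix.mul_smul, Matrix.smul_mul]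
  obtain ⟨c, hc⟩ := hran
  have hBr : K *ᵥ (V *ᵥ c) = B *ᵥ rdir := by
    rw [hc, mulVec_mulVec, Matrix.mul_nonsing_inv _ hσ, one_mulVec]
  have hWBr : (Wᵀ * K * V) *ᵥ c = Wᵀ *ᵥ (B *ᵥ rdir) := by
    rw [← hBr]
    simp [mulVec_mulVec, Matrix.mul_assoc]
  have hcsolve : (σ • (Wᵀ * E * V) - Wᵀ * A * V)⁻¹ *ᵥ (Wᵀ *ᵥ (B *ᵥ rdir)) = c := by
    rw [← hWBr, hKr, mulVec_mulVec, Matrix.nonsing_inv_mul _ (hKr ▸ hσr), one_mulVec]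
  rw [Matrix.add_mulVec, Matrix.add_mulVec]
  congr 1
  calc (C * K⁻¹ * B) *ᵥ rdir = C *ᵥ (K⁻¹ *ᵥ (B *ᵥ rdir)) := by
        simp [mulVec_mulVec, Matrix.mul_assoc]
    _ = C *ᵥ (V *ᵥ c) := by rw [hc]
    _ = (C * V * (σ • (Wᵀ * E * V) - Wᵀ * A * V)⁻¹ * (Wᵀ * B)) *ᵥ rdir := by
        rw [← hcsolve]
        simp [mulVec_mulVec, Matrix.mul_assoc]
end

section
/- Let H(s) = C(sE − A)⁻¹B + D with E, A ∈ ℂⁿˣⁿ, B ∈ ℂⁿˣᵐ, C ∈ ℂᵖˣⁿ. Let V, W ∈ ℂⁿˣʳ define the projected reduced system E_r = WᵀEV, A_r = WᵀAV, B_r = WᵀB, C_r = CV, H_r(s) = C_r(sE_r − A_r)⁻¹B_r + D. Let μ ∈ ℂ be such that μE − A and μE_r − A_r are invertible, and let ℓ ∈ ℂᵖ be nonzero. If ((μE − A)⁻ᵀ Cᵀ ℓ) lies in the column space of W, then ℓᵀH(μ) = ℓᵀH_r(μ). -/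
open Matrix
open scoped Matrix

/-- Left tangential interpolation by Petrov-Galerkin projection:
if `(μE - A)⁻ᵀ Cᵀ ℓ` lies in the column space of `W`, then
`ℓᵀ H(μ) = ℓᵀ H_r(μ)`. -/
theorem left_tangential_interpolation
    {n m p r : ℕ}
    (E A : Matrix (Fin n) (Fin n) ℂ) (B : Matrix (Fin n) (Fin m) ℂ)
    (C : Matrix (Fin p) (Fin n) ℂ) (D : Matrix (Fin p) (Fin m) ℂ)
    (V W : Matrix (Fin n) (Fin r) ℂ)
    (μ : ℂ)
    (hμ : IsUnit (μ • E - A).det)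
    (hμr : IsUnit (μ • (Wᵀ * E * V) - Wᵀ * A * V).det)
    (ldir : Fin p → ℂ) (hldir : ldir ≠ 0)
    (hran : ∃ c : Fin r → ℂ, W *ᵥ c = ((μ • E - A)ᵀ)⁻¹ *ᵥ (Cᵀ *ᵥ ldir)) :
    ldir ᵥ* (C * (μ • E - A)⁻¹ * B + D)
      = ldir ᵥ* ((C * V) * (μ • (Wᵀ * E * V) - Wᵀ * A * V)⁻¹ * (Wᵀ * B) + D) := by
  obtain ⟨c, hc⟩ := hran
  set K := μ • E - A with hK
  have hKT : IsUnit Kᵀ.det := by rwa [Matrix.det_transpose]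
  have hKr : μ • (Wᵀ * E * V) - Wᵀ * A * V = Wᵀ * K * V := by
    simp [hK, Matrix.mul_sub, Matrix.sub_mul, Matrix.mul_smul, Matrix.smul_mul]
  have hμr' : IsUnit (Wᵀ * K * V).det := by rwa [hKr] at hμr
  have hCl : Cᵀ *ᵥ ldir = (Kᵀ * W) *ᵥ c := by
    rw [← Matrix.mulVec_mulVec, hc, Matrix.mulVec_mulVec,
      Matrix.mul_nonsing_inv _ hKT, Matrix.one_mulVec]
  have hlC : ldir ᵥ* C = c ᵥ* (Wᵀ * K) := by
    rw [← Matrix.transpose_transpose C, Matrix.vecMul_transpose, hCl,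
      ← Matrix.vecMul_transpose, Matrix.transpose_mul, Matrix.transpose_transpose]
  rw [Matrix.vecMul_add, Matrix.vecMul_add, hKr]
  congr 1
  have L : ldir ᵥ* (C * K⁻¹ * B) = c ᵥ* (Wᵀ * B) := by
    rw [Matrix.mul_assoc C, ← Matrix.vecMul_vecMul, hlC, Matrix.vecMul_vecMul,
      ← Matrix.mul_assoc, Matrix.mul_assoc Wᵀ K K⁻¹, Matrix.mul_nonsing_inv _ hμ, Matrix.mul_one]
  have h1 : ldir ᵥ* (C * V) = c ᵥ* (Wᵀ * K * V) := by
    rw [← Matrix.vecMul_vecMul, hlC, Matrix.vecMul_vecMul]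
  have R : ldir ᵥ* (C * V * (Wᵀ * K * V)⁻¹ * (Wᵀ * B)) = c ᵥ* (Wᵀ * B) := by
    rw [Matrix.mul_assoc (C * V), ← Matrix.vecMul_vecMul, h1, Matrix.vecMul_vecMul,
      ← Matrix.mul_assoc, Matrix.mul_nonsing_inv _ hμr', Matrix.one_mul]
  rw [L, R]
end

section
/- Let H(s) = C(sE − A)⁻¹B + D and let H_r(s) = C_r(sE_r − A_r)⁻¹B_r + D be the Petrov-Galerkin reduced model with E_r = WᵀEV, A_r = WᵀAV, B_r = WᵀB, C_r = CV. Let σ ∈ ℂ with σE − A and σE_r − A_r invertible, and let r ∈ ℂᵐ, ℓ ∈ ℂᵖ be nonzero. If (σE − A)⁻¹Br ∈ Ran(V) and (σE − A)⁻ᵀCᵀℓ ∈ Ran(W), then ℓᵀH'(σ)r = ℓᵀH_r'(σ)r, where H'(s) = −C(sE − A)⁻¹E(sE − A)⁻¹B is the derivative of H with respect to s. -/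
/-!
Write `K = σE - A`, so that `σE_r - A_r = WᵀKV`. If `Vc = K⁻¹Br` then `WᵀKV c = WᵀBr`, so the
reduced resolvent returns exactly `c`; dually, if `Wd = K⁻ᵀCᵀℓ` it returns `d` on the left.
Hence both bitangential derivatives equal `(Wd)ᵀ E (Vc)`.
-/

open Matrix

namespace Matrix

variable {ι κ μ ν ο π R : Type*} [Fintype ι] [Fintype κ] [Fintype μ] [Fintype ν] [Fintype ο]
  [Fintype π]

section CommRing

variable [DecidableEq κ] [CommRing R] {P : Matrix κ ι R} {K : Matrix ι ι R} {Q : Matrix ι κ R}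

theorem nonsing_inv_mul_mul_mulVec_mulVec (hPKQ : IsUnit (P * K * Q).det) (c : κ → R) :
    (P * K * Q)⁻¹ *ᵥ (P *ᵥ (K *ᵥ (Q *ᵥ c))) = c := by
  simp only [mulVec_mulVec, ← Matrix.mul_assoc, nonsing_inv_mul _ hPKQ, one_mulVec]

theorem vecMul_vecMul_nonsing_inv_mul_mul (hPKQ : IsUnit (P * K * Q).det) (d : κ → R) :
    d ᵥ* P ᵥ* K ᵥ* Q ᵥ* (P * K * Q)⁻¹ = d := by
  simp only [vecMul_vecMul, mul_nonsing_inv _ hPKQ, vecMul_one]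

end CommRing

theorem dotProduct_mul_mul_mulVec [NonUnitalSemiring R] (v : ι → R)
    (X : Matrix ι κ R) (M : Matrix κ μ R) (Y : Matrix μ ν R) (w : ν → R) :
    v ⬝ᵥ (X * M * Y) *ᵥ w = (v ᵥ* X) ⬝ᵥ M *ᵥ (Y *ᵥ w) := by
  simp only [dotProduct_mulVec, vecMul_vecMul, Matrix.mul_assoc]

theorem dotProduct_mul_mul_mul_mul_mulVec [NonUnitalSemiring R] (v : ι → R)
    (X : Matrix ι κ R) (L : Matrix κ μ R) (M : Matrix μ ν R) (N : Matrix ν ο R)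
    (Y : Matrix ο π R) (w : π → R) :
    v ⬝ᵥ (X * L * M * N * Y) *ᵥ w = (v ᵥ* X ᵥ* L) ⬝ᵥ M *ᵥ (N *ᵥ (Y *ᵥ w)) := by
  simp only [dotProduct_mulVec, vecMul_vecMul, Matrix.mul_assoc]

end Matrix

theorem bitangential_hermite_interpolation_general
    {n m p r : ℕ}
    (E A : Matrix (Fin n) (Fin n) ℂ) (B : Matrix (Fin n) (Fin m) ℂ)
    (C : Matrix (Fin p) (Fin n) ℂ)
    (V W : Matrix (Fin n) (Fin r) ℂ)
    (σ : ℂ)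
    (hσ : IsUnit (σ • E - A).det)
    (hσr : IsUnit (σ • (Wᵀ * E * V) - Wᵀ * A * V).det)
    (rdir : Fin m → ℂ)
    (ldir : Fin p → ℂ)
    (hranV : ∃ c : Fin r → ℂ, V *ᵥ c = (σ • E - A)⁻¹ *ᵥ (B *ᵥ rdir))
    (hranW : ∃ c : Fin r → ℂ, W *ᵥ c = ((σ • E - A)ᵀ)⁻¹ *ᵥ (Cᵀ *ᵥ ldir)) :
    ldir ⬝ᵥ ((-(C * (σ • E - A)⁻¹ * E * (σ • E - A)⁻¹ * B)) *ᵥ rdir)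
      = ldir ⬝ᵥ ((-((C * V) * (σ • (Wᵀ * E * V) - Wᵀ * A * V)⁻¹ * (Wᵀ * E * V) *
            (σ • (Wᵀ * E * V) - Wᵀ * A * V)⁻¹ * (Wᵀ * B))) *ᵥ rdir) := by
  obtain ⟨c, hc⟩ := hranV
  obtain ⟨d, hd⟩ := hranW
  set K := σ • E - A
  have hKr : σ • (Wᵀ * E * V) - Wᵀ * A * V = Wᵀ * K * V := by
    simp only [K, Matrix.mul_sub, Matrix.sub_mul, Matrix.mul_smul, Matrix.smul_mul]
  rw [hKr] at hσr ⊢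
  rw [← transpose_nonsing_inv, mulVec_transpose, mulVec_transpose] at hd
  have hBr : B *ᵥ rdir = K *ᵥ (V *ᵥ c) := by
    rw [hc, mulVec_mulVec, mul_nonsing_inv _ hσ, one_mulVec]
  have hCl : ldir ᵥ* C = d ᵥ* Wᵀ ᵥ* K := by
    rw [vecMul_transpose, hd, vecMul_vecMul, nonsing_inv_mul _ hσ, vecMul_one]
  have hfull : ldir ⬝ᵥ (C * K⁻¹ * E * K⁻¹ * B) *ᵥ rdir = (W *ᵥ d) ⬝ᵥ E *ᵥ (V *ᵥ c) := by
    rw [dotProduct_mul_mul_mul_mul_mulVec, ← hd, ← hc]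
  have hred :
      ldir ⬝ᵥ (C * V * (Wᵀ * K * V)⁻¹ * (Wᵀ * E * V) * (Wᵀ * K * V)⁻¹ * (Wᵀ * B)) *ᵥ rdir
        = (W *ᵥ d) ⬝ᵥ E *ᵥ (V *ᵥ c) := by
    rw [dotProduct_mul_mul_mul_mul_mulVec, ← vecMul_vecMul ldir C, ← mulVec_mulVec rdir Wᵀ B,
      hBr, hCl, nonsing_inv_mul_mul_mulVec_mulVec hσr, vecMul_vecMul_nonsing_inv_mul_mul hσr,
      dotProduct_mul_mul_mulVec, vecMul_transpose]
  rw [neg_mulVec, neg_mulVec, dotProduct_neg, dotProduct_neg, hfull, hred]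

/-- Bitangential Hermite interpolation by two-sided Petrov-Galerkin projection:
if both tangential subspace conditions hold at `σ`, then the derivatives of the
full and reduced transfer functions agree bitangentially:
`ℓᵀ H'(σ) r = ℓᵀ H_r'(σ) r`, where `H'(s) = -C (sE-A)⁻¹ E (sE-A)⁻¹ B`. -/
theorem bitangential_hermite_interpolation
    {n m p r : ℕ}
    (E A : Matrix (Fin n) (Fin n) ℂ) (B : Matrix (Fin n) (Fin m) ℂ)
    (C : Matrix (Fin p) (Fin n) ℂ) (D : Matrix (Fin p) (Fin m) ℂ)
    (V W : Matrix (Fin n) (Fin r) ℂ)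
    (σ : ℂ)
    (hσ : IsUnit (σ • E - A).det)
    (hσr : IsUnit (σ • (Wᵀ * E * V) - Wᵀ * A * V).det)
    (rdir : Fin m → ℂ) (hrdir : rdir ≠ 0)
    (ldir : Fin p → ℂ) (hldir : ldir ≠ 0)
    (hranV : ∃ c : Fin r → ℂ, V *ᵥ c = (σ • E - A)⁻¹ *ᵥ (B *ᵥ rdir))
    (hranW : ∃ c : Fin r → ℂ, W *ᵥ c = ((σ • E - A)ᵀ)⁻¹ *ᵥ (Cᵀ *ᵥ ldir)) :
    ldir ⬝ᵥ ((-(C * (σ • E - A)⁻¹ * E * (σ • E - A)⁻¹ * B)) *ᵥ rdir)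
      = ldir ⬝ᵥ ((-((C * V) * (σ • (Wᵀ * E * V) - Wᵀ * A * V)⁻¹ * (Wᵀ * E * V) *
            (σ • (Wᵀ * E * V) - Wᵀ * A * V)⁻¹ * (Wᵀ * B))) *ᵥ rdir) :=
  bitangential_hermite_interpolation_general E A B C V W σ hσ hσr rdir ldir hranV hranW
end

section
/- Let H(s) = C(sE − A)⁻¹B + D and let H_r be the Petrov-Galerkin reduced model built from V, W ∈ ℂⁿˣʳ. Fix σ ∈ ℂ with σE − A and σE_r − A_r invertible and a nonzero direction r ∈ ℂᵐ. If for all j = 1, …, N the vectors ((σE − A)⁻¹E)^{j−1}(σE − A)⁻¹Br lie in the column space of V, then H^{(k)}(σ)r = H_r^{(k)}(σ)r for k = 0, 1, …, N−1, where H^{(k)} denotes the k-th derivative with respect to s, and H^{(k)}(σ) = (−1)^k k! · C((σE−A)⁻¹E)^k(σE−A)⁻¹B for k ≥ 1. -/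
/-!
Write `K = σE - A` and `f_j = (K⁻¹E)^j K⁻¹ B r` for the right Krylov vectors; the reduced pencil
is `K_r = Wᵀ K V`, with reduced Krylov vectors `g_j`. Both sequences are generated by one linear
solve per step, `K f_j = y_j` and `K_r g_j = Wᵀ y_j`, where `y_0 = B r` and `y_{j+1} = E f_j`.
A Petrov–Galerkin solve is exact on the range of `V`: if `K (V c) = y` then `K_r⁻¹ Wᵀ y = c`.
By induction on `j`, as long as `f_j` lies in the range of `V` we get `V g_j = f_j`, and the
derivatives `H⁽ᵏ⁾(σ) r = (-1)^k k! C f_k (+ D r)` then agree with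
`H_r⁽ᵏ⁾(σ) r = (-1)^k k! (C V) g_k (+ D r)`.
-/

open Matrix
open scoped Matrix

/-- The `k`-th derivative of `s ↦ C (sE - A)⁻¹ B + D` at `σ`:
`H⁽⁰⁾(σ) = C (σE-A)⁻¹ B + D` and for `k ≥ 1`,
`H⁽ᵏ⁾(σ) = (-1)^k k! · C ((σE-A)⁻¹E)^k (σE-A)⁻¹ B`. -/
noncomputable def transferDeriv {n m p : ℕ}
    (E A : Matrix (Fin n) (Fin n) ℂ) (B : Matrix (Fin n) (Fin m) ℂ)
    (C : Matrix (Fin p) (Fin n) ℂ) (D : Matrix (Fin p) (Fin m) ℂ)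
    (σ : ℂ) (k : ℕ) : Matrix (Fin p) (Fin m) ℂ :=
  if k = 0 then C * (σ • E - A)⁻¹ * B + D
  else ((-1 : ℂ) ^ k * (k.factorial : ℂ)) •
    (C * ((σ • E - A)⁻¹ * E) ^ k * (σ • E - A)⁻¹ * B)

section PetrovGalerkin

variable {R ι κ : Type*} [CommRing R] [Fintype ι] [Fintype κ] [DecidableEq κ]

theorem Matrix.galerkin_solve_eq_of_mulVec_eq {K : Matrix ι ι R} {V : Matrix ι κ R}
    {Wt : Matrix κ ι R} (hKr : IsUnit (Wt * K * V).det) {c : κ → R} {y : ι → R}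
    (h : K *ᵥ (V *ᵥ c) = y) : (Wt * K * V)⁻¹ *ᵥ (Wt *ᵥ y) = c := by
  have hproj : Wt *ᵥ y = (Wt * K * V) *ᵥ c := by rw [← h, mulVec_mulVec, mulVec_mulVec]
  rw [hproj, mulVec_mulVec, nonsing_inv_mul _ hKr, one_mulVec]

variable [DecidableEq ι]

noncomputable def krylovVec (K E : Matrix ι ι R) (b : ι → R) (k : ℕ) : ι → R :=
  (K⁻¹ * E) ^ k *ᵥ (K⁻¹ *ᵥ b)

theorem krylovVec_zero (K E : Matrix ι ι R) (b : ι → R) : krylovVec K E b 0 = K⁻¹ *ᵥ b := by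
  rw [krylovVec, pow_zero, one_mulVec]

theorem krylovVec_succ (K E : Matrix ι ι R) (b : ι → R) (k : ℕ) :
    krylovVec K E b (k + 1) = K⁻¹ *ᵥ (E *ᵥ krylovVec K E b k) := by
  rw [krylovVec, krylovVec, pow_succ', ← mulVec_mulVec, ← mulVec_mulVec]

theorem krylovVec_mulVec {μ : Type*} [Fintype μ] (K E : Matrix ι ι R) (B : Matrix ι μ R)
    (v : μ → R) (k : ℕ) :
    krylovVec K E (B *ᵥ v) k = ((K⁻¹ * E) ^ k * K⁻¹ * B) *ᵥ v := by
  rw [krylovVec, mulVec_mulVec, mulVec_mulVec, Matrix.mul_assoc]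

theorem mulVec_galerkin_krylovVec_eq_of_mem_range {K E : Matrix ι ι R} {V : Matrix ι κ R}
    {Wt : Matrix κ ι R} (hK : IsUnit K.det) (hKr : IsUnit (Wt * K * V).det) {b : ι → R}
    {N : ℕ} (hran : ∀ j < N, ∃ c, V *ᵥ c = krylovVec K E b j) :
    ∀ j < N, V *ᵥ krylovVec (Wt * K * V) (Wt * E * V) (Wt *ᵥ b) j = krylovVec K E b j := by
  have solve_step : ∀ {j : ℕ} {y : ι → R}, j < N → krylovVec K E b j = K⁻¹ *ᵥ y →
      krylovVec (Wt * K * V) (Wt * E * V) (Wt *ᵥ b) j = (Wt * K * V)⁻¹ *ᵥ (Wt *ᵥ y) →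
      V *ᵥ krylovVec (Wt * K * V) (Wt * E * V) (Wt *ᵥ b) j = krylovVec K E b j := by
    intro j y hj hf hg
    obtain ⟨c, hc⟩ := hran j hj
    have hKc : K *ᵥ (V *ᵥ c) = y := by
      rw [hc, hf, mulVec_mulVec, mul_nonsing_inv _ hK, one_mulVec]
    rw [hg, galerkin_solve_eq_of_mulVec_eq hKr hKc, hc]
  intro j
  induction j with
  | zero => exact fun hj => solve_step hj (krylovVec_zero ..) (krylovVec_zero ..)
  | succ j ih =>
    intro hj
    refine solve_step hj (krylovVec_succ ..) ?_
    rw [krylovVec_succ, ← mulVec_mulVec, ih (by omega), ← mulVec_mulVec]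

end PetrovGalerkin

theorem transferDeriv_mulVec {n m p : ℕ} (E A : Matrix (Fin n) (Fin n) ℂ)
    (B : Matrix (Fin n) (Fin m) ℂ) (C : Matrix (Fin p) (Fin n) ℂ) (D : Matrix (Fin p) (Fin m) ℂ)
    (σ : ℂ) (k : ℕ) (v : Fin m → ℂ) :
    transferDeriv E A B C D σ k *ᵥ v =
      ((-1 : ℂ) ^ k * (k.factorial : ℂ)) • (C *ᵥ krylovVec (σ • E - A) E (B *ᵥ v) k) +
        if k = 0 then D *ᵥ v else 0 := by
  rw [krylovVec_mulVec, mulVec_mulVec]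
  unfold transferDeriv
  split_ifs with hk
  · subst hk
    simp only [pow_zero, Nat.factorial_zero, Nat.cast_one, mul_one, one_smul, add_mulVec,
      Matrix.one_mul, Matrix.mul_assoc]
  · simp only [smul_mulVec, add_zero, Matrix.mul_assoc]

theorem higher_order_right_tangential_interpolation_general
    {n m p r : ℕ} (N : ℕ)
    (E A : Matrix (Fin n) (Fin n) ℂ) (B : Matrix (Fin n) (Fin m) ℂ)
    (C : Matrix (Fin p) (Fin n) ℂ) (D : Matrix (Fin p) (Fin m) ℂ)
    (V W : Matrix (Fin n) (Fin r) ℂ)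
    (σ : ℂ)
    (hσ : IsUnit (σ • E - A).det)
    (hσr : IsUnit (σ • (Wᵀ * E * V) - Wᵀ * A * V).det)
    (rdir : Fin m → ℂ)
    (hran : ∀ j : ℕ, 1 ≤ j → j ≤ N →
      ∃ c : Fin r → ℂ,
        V *ᵥ c = (((σ • E - A)⁻¹ * E) ^ (j - 1) * (σ • E - A)⁻¹ * B) *ᵥ rdir) :
    ∀ k : ℕ, k < N →
      (transferDeriv E A B C D σ k) *ᵥ rdir
        = (transferDeriv (Wᵀ * E * V) (Wᵀ * A * V) (Wᵀ * B) (C * V) D σ k) *ᵥ rdir := by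
  intro k hk
  have hpencil : Wᵀ * (σ • E - A) * V = σ • (Wᵀ * E * V) - Wᵀ * A * V := by
    rw [Matrix.mul_sub, Matrix.sub_mul, Matrix.mul_smul, Matrix.smul_mul]
  have hkrylov_range : ∀ j < N, ∃ c, V *ᵥ c = krylovVec (σ • E - A) E (B *ᵥ rdir) j := fun j hj => by
    simpa only [krylovVec_mulVec, Nat.add_sub_cancel] using hran (j + 1) (by omega) hj
  have hmatch := mulVec_galerkin_krylovVec_eq_of_mem_range hσ (hpencil ▸ hσr) hkrylov_range k hk
  rw [transferDeriv_mulVec, transferDeriv_mulVec, ← hmatch, hpencil, mulVec_mulVec (M := C),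
    mulVec_mulVec (M := Wᵀ)]

/-- Higher-order right tangential Hermite interpolation: if the vectors
`((σE-A)⁻¹E)^{j-1} (σE-A)⁻¹ B r` for `j = 1, …, N` lie in the column space of `V`,
then `H⁽ᵏ⁾(σ) r = H_r⁽ᵏ⁾(σ) r` for `k = 0, 1, …, N-1`. -/
theorem higher_order_right_tangential_interpolation
    {n m p r : ℕ} (N : ℕ)
    (E A : Matrix (Fin n) (Fin n) ℂ) (B : Matrix (Fin n) (Fin m) ℂ)
    (C : Matrix (Fin p) (Fin n) ℂ) (D : Matrix (Fin p) (Fin m) ℂ)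
    (V W : Matrix (Fin n) (Fin r) ℂ)
    (σ : ℂ)
    (hσ : IsUnit (σ • E - A).det)
    (hσr : IsUnit (σ • (Wᵀ * E * V) - Wᵀ * A * V).det)
    (rdir : Fin m → ℂ) (hrdir : rdir ≠ 0)
    (hran : ∀ j : ℕ, 1 ≤ j → j ≤ N →
      ∃ c : Fin r → ℂ,
        V *ᵥ c = (((σ • E - A)⁻¹ * E) ^ (j - 1) * (σ • E - A)⁻¹ * B) *ᵥ rdir) :
    ∀ k : ℕ, k < N →
      (transferDeriv E A B C D σ k) *ᵥ rdir
        = (transferDeriv (Wᵀ * E * V) (Wᵀ * A * V) (Wᵀ * B) (C * V) D σ k) *ᵥ rdir :=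
  higher_order_right_tangential_interpolation_general N E A B C D V W σ hσ hσr rdir hran
end

section
/- For any invertible matrices M, N ∈ ℂⁿˣⁿ and k ≥ 1, the k-th derivative of the matrix-valued function s ↦ (sE − A)⁻¹ at a point σ where σE − A is invertible equals (−1)^k k! ((σE − A)⁻¹E)^k (σE − A)⁻¹. -/
open Matrix
open scoped Matrix

/-!
With `R(s) = Ring.inverse (s • E - A)`, the derivative of inversion gives `R' = -R E R`, so by
the product rule `((R E)^m R)' = -(m + 1) (R E)^(m+1) R`; iterating produces `(-1)^k k!`.
Since `R` is smooth wherever `s • E - A` is a unit, taking a matrix entry commutes with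
differentiation.
-/

theorem IsOpen.eqOn_iteratedDeriv_of_hasDerivAt {𝕜 F : Type*} [NontriviallyNormedField 𝕜]
    [NormedAddCommGroup F] [NormedSpace 𝕜 F] {U : Set 𝕜} (hU : IsOpen U) {g : ℕ → 𝕜 → F}
    (hg : ∀ m, ∀ x ∈ U, HasDerivAt (g m) (g (m + 1) x) x) (k : ℕ) :
    Set.EqOn (iteratedDeriv k (g 0)) (g k) U := by
  induction k with
  | zero => intro x _; simp
  | succ k ih =>
    intro x hx
    rw [iteratedDeriv_succ, (ih.eventuallyEq_of_mem (hU.mem_nhds hx)).deriv_eq]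
    exact (hg k x hx).deriv

theorem ContinuousLinearMap.iteratedDeriv_comp_left {𝕜 F G : Type*} [NontriviallyNormedField 𝕜]
    [NormedAddCommGroup F] [NormedSpace 𝕜 F] [NormedAddCommGroup G] [NormedSpace 𝕜 G]
    (L : F →L[𝕜] G) {f : 𝕜 → F} {x : 𝕜} {k : ℕ} (hf : ContDiffAt 𝕜 k f x) :
    iteratedDeriv k (fun y => L (f y)) x = L (iteratedDeriv k f x) := by
  simp only [iteratedDeriv_eq_iteratedFDeriv]
  rw [show (fun y => L (f y)) = L ∘ f from rfl, L.iteratedFDeriv_comp_left hf le_rfl]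
  rfl

section Pencil

variable {𝕜 R : Type*} [NontriviallyNormedField 𝕜] [NormedRing R] [NormedAlgebra 𝕜 R]
  [HasSummableGeomSeries R] (E A : R)

theorem isOpen_setOf_isUnit_smul_sub : IsOpen {s : 𝕜 | IsUnit (s • E - A)} :=
  Units.isOpen.preimage (by fun_prop)

theorem contDiffAt_ringInverse_smul_sub {s : 𝕜} (hs : IsUnit (s • E - A)) (n : WithTop ℕ∞) :
    ContDiffAt 𝕜 n (fun s : 𝕜 => Ring.inverse (s • E - A)) s := by
  obtain ⟨u, hu⟩ := hs
  exact (hu ▸ contDiffAt_ringInverse 𝕜 u).comp s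
    ((contDiff_id.smul contDiff_const).sub contDiff_const).contDiffAt

theorem hasDerivAt_ringInverse_smul_sub {s : 𝕜} (hs : IsUnit (s • E - A)) :
    HasDerivAt (fun s : 𝕜 => Ring.inverse (s • E - A))
      (-(Ring.inverse (s • E - A) * E * Ring.inverse (s • E - A))) s := by
  obtain ⟨u, hu⟩ := hs
  have hlin : HasDerivAt (fun s : 𝕜 => s • E - A) E s := by
    simpa using ((hasDerivAt_id s).smul_const E).sub_const A
  have hinv := hasFDerivAt_ringInverse (𝕜 := 𝕜) u
  rw [← Ring.inverse_unit, hu] at hinv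
  exact hinv.comp_hasDerivAt s hlin

theorem hasDerivAt_pow_mul_ringInverse_smul_sub {s : 𝕜} (hs : IsUnit (s • E - A)) (m : ℕ) :
    HasDerivAt (fun s : 𝕜 => (Ring.inverse (s • E - A) * E) ^ m * Ring.inverse (s • E - A))
      (-(m + 1 : 𝕜) • ((Ring.inverse (s • E - A) * E) ^ (m + 1) * Ring.inverse (s • E - A))) s := by
  induction m with
  | zero => simpa using hasDerivAt_ringInverse_smul_sub E A hs
  | succ m ih =>
    have hfun : (fun t : 𝕜 => (Ring.inverse (t • E - A) * E) ^ (m + 1) * Ring.inverse (t • E - A))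
        = fun t => Ring.inverse (t • E - A) * E *
            ((Ring.inverse (t • E - A) * E) ^ m * Ring.inverse (t • E - A)) := by
      funext t
      rw [pow_succ', mul_assoc]
    rw [hfun]
    refine (((hasDerivAt_ringInverse_smul_sub E A hs).mul_const E).fun_mul ih).congr_deriv ?_
    simp only [pow_succ', mul_smul_comm, neg_mul, ← mul_assoc]
    push_cast
    module

theorem iteratedDeriv_ringInverse_smul_sub {s : 𝕜} (hs : IsUnit (s • E - A)) (k : ℕ) :
    iteratedDeriv k (fun s : 𝕜 => Ring.inverse (s • E - A)) s
      = ((-1 : 𝕜) ^ k * k.factorial) •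
          ((Ring.inverse (s • E - A) * E) ^ k * Ring.inverse (s • E - A)) := by
  have hg : ∀ m, ∀ t ∈ {t : 𝕜 | IsUnit (t • E - A)}, HasDerivAt
      (fun t : 𝕜 => ((-1 : 𝕜) ^ m * m.factorial) •
        ((Ring.inverse (t • E - A) * E) ^ m * Ring.inverse (t • E - A)))
      (((-1 : 𝕜) ^ (m + 1) * (m + 1).factorial) •
        ((Ring.inverse (t • E - A) * E) ^ (m + 1) * Ring.inverse (t • E - A))) t := by
    intro m t ht
    refine ((hasDerivAt_pow_mul_ringInverse_smul_sub E A ht m).const_smul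
      ((-1 : 𝕜) ^ m * m.factorial)).congr_deriv ?_
    rw [smul_smul]
    congr 1
    push_cast [Nat.factorial_succ, pow_succ]
    ring
  simpa using (isOpen_setOf_isUnit_smul_sub E A).eqOn_iteratedDeriv_of_hasDerivAt hg k hs

end Pencil

-- Any normed-algebra structure on matrices would do: the statement involves only the topology.
attribute [local instance] Matrix.linftyOpNormedRing Matrix.linftyOpNormedAlgebra

theorem iteratedDeriv_resolvent_general
    {n : ℕ}
    (E A : Matrix (Fin n) (Fin n) ℂ)
    (σ : ℂ) (hσ : IsUnit (σ • E - A).det)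
    (k : ℕ) :
    ∀ i j : Fin n,
      iteratedDeriv k (fun s : ℂ => (s • E - A)⁻¹ i j) σ
        = (((-1 : ℂ) ^ k * (k.factorial : ℂ)) •
            (((σ • E - A)⁻¹ * E) ^ k * (σ • E - A)⁻¹)) i j := by
  intro i j
  have hu : IsUnit (σ • E - A) := (isUnit_iff_isUnit_det _).2 hσ
  simp only [nonsing_inv_eq_ringInverse]
  rw [← iteratedDeriv_ringInverse_smul_sub E A hu k]
  exact (entryLinearMap ℂ ℂ i j).toContinuousLinearMap.iteratedDeriv_comp_left
    (contDiffAt_ringInverse_smul_sub E A hu k)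

/-- The `k`-th entrywise derivative of the resolvent-type function
`s ↦ (sE - A)⁻¹` at a point `σ` where `σE - A` is invertible equals
`(-1)^k k! ((σE - A)⁻¹ E)^k (σE - A)⁻¹`, for every `k ≥ 1`. -/
theorem iteratedDeriv_resolvent
    {n : ℕ}
    (E A : Matrix (Fin n) (Fin n) ℂ)
    (σ : ℂ) (hσ : IsUnit (σ • E - A).det)
    (k : ℕ) (hk : 1 ≤ k) :
    ∀ i j : Fin n,
      iteratedDeriv k (fun s : ℂ => (s • E - A)⁻¹ i j) σ
        = (((-1 : ℂ) ^ k * (k.factorial : ℂ)) •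
            (((σ • E - A)⁻¹ * E) ^ k * (σ • E - A)⁻¹)) i j :=
  iteratedDeriv_resolvent_general E A σ hσ k
end

section
/- Let H(s) = C(sE − A)⁻¹B (with D = 0). Given r distinct right interpolation points σ₁, …, σ_r with directions r₁, …, r_r ∈ ℂᵐ and r distinct left interpolation points μ₁, …, μ_r with directions ℓ₁, …, ℓ_r ∈ ℂᵖ (all σᵢE − A, μᵢE − A invertible), let V have columns (σᵢE − A)⁻¹Brᵢ and W have columns (μᵢE − A)⁻ᵀCᵀℓᵢ. Let R̃ = [r₁, …, r_r] ∈ ℂᵐˣʳ and L̃ᵀ = [ℓ₁, …, ℓ_r]ᵀ. For any D_r ∈ ℂᵖˣᵐ define E_r = WᵀEV, A_r = WᵀAV + L̃ᵀ D_r R̃, B_r = WᵀB − L̃ᵀD_r, C_r = CV − D_r R̃, and H_r(s) = C_r(sE_r − A_r)⁻¹B_r + D_r. Then for each i with σᵢE_r − A_r invertible, H(σᵢ)rᵢ = H_r(σᵢ)rᵢ, and for each i with μᵢE_r − A_r invertible, ℓᵢᵀH(μᵢ) = ℓᵢᵀH_r(μᵢ). -/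
/-!
Write `K(s) = sE - A`. The column `v = V eᵢ` solves `K(σᵢ) v = B rᵢ` and `R̃ eᵢ = rᵢ`, so
`K_r(σᵢ) eᵢ = Wᵀ K(σᵢ) v - L̃ᵀ D_r rᵢ = B_r rᵢ`: the reduced pencil is solved by `eᵢ`.
Hence `H_r(σᵢ) rᵢ = C_r eᵢ + D_r rᵢ = C v = H(σᵢ) rᵢ`, the `D_r` terms cancelling.
Transposing swaps the roles of `(V, R̃)` and `(W, L̃)`, so left interpolation is right
interpolation of the dual realization `(Eᵀ, Aᵀ, Cᵀ, Bᵀ)`.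
-/

open Matrix

section Interpolation

variable {R ι κ μ ν : Type*} [CommRing R] [Fintype ι] [Fintype μ]

theorem mul_nonsing_inv_mul_mulVec_of_mulVec_eq [DecidableEq ι] {K : Matrix ι ι R}
    (hK : IsUnit K.det) (B : Matrix ι μ R) (C : Matrix ν ι R) {r : μ → R} {v : ι → R}
    (hv : K *ᵥ v = B *ᵥ r) :
    (C * K⁻¹ * B) *ᵥ r = C *ᵥ v := by
  rw [← mulVec_mulVec, ← hv, mulVec_mulVec, Matrix.mul_assoc, nonsing_inv_mul _ hK,
    Matrix.mul_one]

theorem reduced_pencil_mulVec_eq [Fintype κ] [Fintype ν] (s : R) (E A : Matrix ι ι R)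
    (B : Matrix ι μ R) (Wt : Matrix κ ι R) (V : Matrix ι κ R) (Lt : Matrix κ ν R)
    (Dr : Matrix ν μ R) (Rt : Matrix μ κ R) {r : μ → R} {x : κ → R}
    (hx : (s • E - A) *ᵥ (V *ᵥ x) = B *ᵥ r) (hRx : Rt *ᵥ x = r) :
    (s • (Wt * E * V) - (Wt * A * V + Lt * Dr * Rt)) *ᵥ x = (Wt * B - Lt * Dr) *ᵥ r := by
  have hpencil : s • (Wt * E * V) - (Wt * A * V + Lt * Dr * Rt)
      = Wt * (s • E - A) * V - Lt * Dr * Rt := by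
    rw [Matrix.mul_sub, Matrix.sub_mul, Matrix.mul_smul, Matrix.smul_mul]
    abel
  rw [hpencil, sub_mulVec, sub_mulVec, ← mulVec_mulVec, ← mulVec_mulVec, hx, ← mulVec_mulVec,
    hRx, mulVec_mulVec]

theorem right_tangential_interpolation_s6 [DecidableEq ι] [Fintype κ] [DecidableEq κ] [Fintype ν]
    {s : R} {E A : Matrix ι ι R} (hK : IsUnit (s • E - A).det)
    (B : Matrix ι μ R) (C : Matrix ν ι R) (Wt : Matrix κ ι R) (V : Matrix ι κ R)
    (Lt : Matrix κ ν R) (Dr : Matrix ν μ R) (Rt : Matrix μ κ R)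
    {Er Ar : Matrix κ κ R} {Br : Matrix κ μ R} {Cr : Matrix ν κ R}
    (hEr : Er = Wt * E * V) (hAr : Ar = Wt * A * V + Lt * Dr * Rt)
    (hBr : Br = Wt * B - Lt * Dr) (hCr : Cr = C * V - Dr * Rt)
    (hKr : IsUnit (s • Er - Ar).det) {r : μ → R} {x : κ → R}
    (hx : (s • E - A) *ᵥ (V *ᵥ x) = B *ᵥ r) (hRx : Rt *ᵥ x = r) :
    (C * (s • E - A)⁻¹ * B) *ᵥ r = (Cr * (s • Er - Ar)⁻¹ * Br + Dr) *ᵥ r := by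
  subst hEr hAr hBr hCr
  have hreduced := reduced_pencil_mulVec_eq s E A B Wt V Lt Dr Rt hx hRx
  rw [add_mulVec, mul_nonsing_inv_mul_mulVec_of_mulVec_eq hKr _ _ hreduced,
    mul_nonsing_inv_mul_mulVec_of_mulVec_eq hK _ _ hx, sub_mulVec, ← mulVec_mulVec,
    ← mulVec_mulVec, hRx, sub_add_cancel]

end Interpolation

theorem transpose_mul_nonsing_inv_pencil_mul {R ι μ ν : Type*} [CommRing R] [Fintype ι]
    [DecidableEq ι] (s : R) (E A : Matrix ι ι R) (B : Matrix ι μ R) (C : Matrix ν ι R) :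
    (C * (s • E - A)⁻¹ * B)ᵀ = Bᵀ * (s • Eᵀ - Aᵀ)⁻¹ * Cᵀ := by
  rw [transpose_mul, transpose_mul, transpose_nonsing_inv, transpose_sub, transpose_smul,
    Matrix.mul_assoc]

theorem interpolation_with_arbitrary_Dr_general
    {n m p rr : ℕ}
    (E A : Matrix (Fin n) (Fin n) ℂ) (B : Matrix (Fin n) (Fin m) ℂ)
    (C : Matrix (Fin p) (Fin n) ℂ)
    (σs μs : Fin rr → ℂ)
    (hσ : ∀ i, IsUnit ((σs i) • E - A).det)
    (hμ : ∀ i, IsUnit ((μs i) • E - A).det)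
    (rs : Fin rr → Fin m → ℂ) (ls : Fin rr → Fin p → ℂ)
    (V W : Matrix (Fin n) (Fin rr) ℂ)
    (hV : V = Matrix.of fun i j => (((σs j) • E - A)⁻¹ *ᵥ (B *ᵥ rs j)) i)
    (hW : W = Matrix.of fun i j => ((((μs j) • E - A)ᵀ)⁻¹ *ᵥ (Cᵀ *ᵥ ls j)) i)
    (Rt : Matrix (Fin m) (Fin rr) ℂ) (hRt : Rt = Matrix.of fun i j => rs j i)
    (Lt : Matrix (Fin rr) (Fin p) ℂ) (hLt : Lt = Matrix.of fun i j => ls i j)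
    (Dr : Matrix (Fin p) (Fin m) ℂ)
    (Er Ar : Matrix (Fin rr) (Fin rr) ℂ)
    (Br : Matrix (Fin rr) (Fin m) ℂ) (Cr : Matrix (Fin p) (Fin rr) ℂ)
    (hEr : Er = Wᵀ * E * V)
    (hAr : Ar = Wᵀ * A * V + Lt * Dr * Rt)
    (hBr : Br = Wᵀ * B - Lt * Dr)
    (hCr : Cr = C * V - Dr * Rt) :
    (∀ i : Fin rr, IsUnit ((σs i) • Er - Ar).det →
        (C * ((σs i) • E - A)⁻¹ * B) *ᵥ rs i
          = (Cr * ((σs i) • Er - Ar)⁻¹ * Br + Dr) *ᵥ rs i) ∧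
    (∀ i : Fin rr, IsUnit ((μs i) • Er - Ar).det →
        ls i ᵥ* (C * ((μs i) • E - A)⁻¹ * B)
          = ls i ᵥ* (Cr * ((μs i) • Er - Ar)⁻¹ * Br + Dr)) := by
  refine ⟨fun i hKr => ?_, fun i hKr => ?_⟩
  · have hVcol : V *ᵥ Pi.single i 1 = (σs i • E - A)⁻¹ *ᵥ (B *ᵥ rs i) := by
      rw [hV, mulVec_single_one]; rfl
    have hRtcol : Rt *ᵥ Pi.single i 1 = rs i := by
      rw [hRt, mulVec_single_one]; rfl
    refine right_tangential_interpolation_s6 (hσ i) B C Wᵀ V Lt Dr Rt hEr hAr hBr hCr hKr ?_ hRtcol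
    rw [hVcol, mulVec_mulVec, mul_nonsing_inv _ (hσ i), one_mulVec]
  · have hKt : (μs i • E - A)ᵀ = μs i • Eᵀ - Aᵀ := by rw [transpose_sub, transpose_smul]
    have hK : IsUnit (μs i • Eᵀ - Aᵀ).det := by rw [← hKt, det_transpose]; exact hμ i
    have hKrt : IsUnit (μs i • Erᵀ - Arᵀ).det := by
      rw [← transpose_smul, ← transpose_sub, det_transpose]; exact hKr
    have hWcol : W *ᵥ Pi.single i 1 = (μs i • Eᵀ - Aᵀ)⁻¹ *ᵥ (Cᵀ *ᵥ ls i) := by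
      rw [hW, mulVec_single_one, ← hKt]; rfl
    have hLtcol : Ltᵀ *ᵥ Pi.single i 1 = ls i := by
      rw [hLt, mulVec_single_one]; rfl
    rw [← mulVec_transpose, ← mulVec_transpose, transpose_add,
      transpose_mul_nonsing_inv_pencil_mul, transpose_mul_nonsing_inv_pencil_mul]
    refine right_tangential_interpolation_s6 hK Cᵀ Bᵀ Vᵀ W Rtᵀ Drᵀ Ltᵀ ?_ ?_ ?_ ?_ hKrt ?_ hLtcol
    · simp [hEr, transpose_mul, Matrix.mul_assoc]
    · simp [hAr, transpose_mul, Matrix.mul_assoc]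
    · simp [hCr, transpose_mul]
    · simp [hBr, transpose_mul]
    · rw [hWcol, mulVec_mulVec, mul_nonsing_inv _ hK, one_mulVec]

/-- Rational tangential interpolants with an arbitrary `D_r` term
(Mayo–Antoulas / Beattie–Gugercin construction): with interpolatory bases `V, W`
and modified reduced matrices
`E_r = WᵀEV`, `A_r = WᵀAV + L̃ᵀ D_r R̃`, `B_r = WᵀB - L̃ᵀ D_r`, `C_r = CV - D_r R̃`,
the reduced model `H_r(s) = C_r (sE_r - A_r)⁻¹ B_r + D_r` tangentially interpolates
`H(s) = C (sE - A)⁻¹ B` at the right data `(σᵢ, rᵢ)` and the left data `(μᵢ, ℓᵢ)`. -/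
theorem interpolation_with_arbitrary_Dr
    {n m p rr : ℕ}
    (E A : Matrix (Fin n) (Fin n) ℂ) (B : Matrix (Fin n) (Fin m) ℂ)
    (C : Matrix (Fin p) (Fin n) ℂ)
    (σs μs : Fin rr → ℂ)
    (hσdist : Function.Injective σs) (hμdist : Function.Injective μs)
    (hσ : ∀ i, IsUnit ((σs i) • E - A).det)
    (hμ : ∀ i, IsUnit ((μs i) • E - A).det)
    (rs : Fin rr → Fin m → ℂ) (ls : Fin rr → Fin p → ℂ)
    (V W : Matrix (Fin n) (Fin rr) ℂ)
    (hV : V = Matrix.of fun i j => (((σs j) • E - A)⁻¹ *ᵥ (B *ᵥ rs j)) i)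
    (hW : W = Matrix.of fun i j => ((((μs j) • E - A)ᵀ)⁻¹ *ᵥ (Cᵀ *ᵥ ls j)) i)
    (Rt : Matrix (Fin m) (Fin rr) ℂ) (hRt : Rt = Matrix.of fun i j => rs j i)
    (Lt : Matrix (Fin rr) (Fin p) ℂ) (hLt : Lt = Matrix.of fun i j => ls i j)
    (Dr : Matrix (Fin p) (Fin m) ℂ)
    (Er Ar : Matrix (Fin rr) (Fin rr) ℂ)
    (Br : Matrix (Fin rr) (Fin m) ℂ) (Cr : Matrix (Fin p) (Fin rr) ℂ)
    (hEr : Er = Wᵀ * E * V)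
    (hAr : Ar = Wᵀ * A * V + Lt * Dr * Rt)
    (hBr : Br = Wᵀ * B - Lt * Dr)
    (hCr : Cr = C * V - Dr * Rt) :
    (∀ i : Fin rr, IsUnit ((σs i) • Er - Ar).det →
        (C * ((σs i) • E - A)⁻¹ * B) *ᵥ rs i
          = (Cr * ((σs i) • Er - Ar)⁻¹ * Br + Dr) *ᵥ rs i) ∧
    (∀ i : Fin rr, IsUnit ((μs i) • Er - Ar).det →
        ls i ᵥ* (C * ((μs i) • E - A)⁻¹ * B)
          = ls i ᵥ* (Cr * ((μs i) • Er - Ar)⁻¹ * Br + Dr)) :=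
  interpolation_with_arbitrary_Dr_general E A B C σs μs hσ hμ rs ls V W hV hW Rt hRt Lt hLt Dr Er Ar
    Br Cr hEr hAr hBr hCr
end

section
/- Let H be a stable transfer function and H_r(s) = Σᵢ₌₁ʳ ℓᵢrᵢᵀ/(s − λᵢ) with distinct stable poles λᵢ. Define J = ‖H − H_r‖²_{H₂} as a function of the variables (λᵢ, ℓᵢ, rᵢ). Then the partial derivative of J with respect to λᵢ equals ∂J/∂λᵢ = −2 ℓᵢᵀ (H_r'(−λᵢ) − H'(−λᵢ)) rᵢ. -/
open Matrix
open scoped Matrix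

/-!
Moving the pole `λᵢ` changes the linear term `Σₖ ℓₖᵀ H(-λₖ) rₖ` only through its `i`-th summand,
with derivative `-ℓᵢᵀ H'(-λᵢ) rᵢ`, and the pole-pole term only through its `i`-th row and column.
Since the kernel `(ℓₖᵀℓₗ)(rₗᵀrₖ)` is symmetric, row and column contribute equally, giving
`2 Σⱼ (ℓᵢᵀℓⱼ)(rⱼᵀrᵢ) / (λᵢ + λⱼ)² = -2 ℓᵢᵀ H_r'(-λᵢ) rᵢ`.
Stability keeps every `λₖ + λₗ` away from `0`.
-/

section UpdateDeriv

variable {ι 𝕜 F : Type*} [DecidableEq ι] [NontriviallyNormedField 𝕜]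
  [NormedAddCommGroup F] [NormedSpace 𝕜 F]

theorem hasDerivAt_update_apply (f : ι → 𝕜) (i k : ι) (x : 𝕜) :
    HasDerivAt (fun t => Function.update f i t k) ((Pi.single i 1 : ι → 𝕜) k) x := by
  by_cases hk : k = i
  · subst hk
    simpa only [Function.update_self, Pi.single_eq_same] using hasDerivAt_id' x
  · simpa only [Function.update_of_ne hk, Pi.single_eq_of_ne hk] using hasDerivAt_const _ _

theorem hasDerivAt_sum_comp_update [Fintype ι] (g : ι → 𝕜 → F) (f : ι → 𝕜) (i : ι)
    {g' : F} (hg : HasDerivAt (g i) g' (f i)) :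
    HasDerivAt (fun t => ∑ k, g k (Function.update f i t k)) g' (f i) := by
  have hterm (k : ι) :
      HasDerivAt (fun t => g k (Function.update f i t k)) ((Pi.single i g' : ι → F) k)
        (f i) := by
    by_cases hk : k = i
    · subst hk
      simpa only [Function.update_self, Pi.single_eq_same] using hg
    · simpa only [Function.update_of_ne hk, Pi.single_eq_of_ne hk] using hasDerivAt_const _ _
  simpa only [Fintype.sum_pi_single'] using HasDerivAt.fun_sum (u := Finset.univ) fun k _ => hterm k

theorem hasDerivAt_sum_sum_div_neg_update_sub_update [Fintype ι] (a : ι → ι → 𝕜)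
    (ha : ∀ k l, a k l = a l k) (f : ι → 𝕜) (hf : ∀ k l, -f k - f l ≠ 0) (i : ι) :
    HasDerivAt (fun t => ∑ k, ∑ l, a k l / (-Function.update f i t k - Function.update f i t l))
      (2 * ∑ j, a i j / (-f i - f j) ^ 2) (f i) := by
  have hterm (k l : ι) :
      HasDerivAt (fun t => a k l / (-Function.update f i t k - Function.update f i t l))
        (((Pi.single i 1 : ι → 𝕜) k + (Pi.single i 1 : ι → 𝕜) l) * (a k l / (-f k - f l) ^ 2))
        (f i) := by
    have hden := (hasDerivAt_update_apply f i k (f i)).fun_neg.fun_sub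
      (hasDerivAt_update_apply f i l (f i))
    refine ((hasDerivAt_const _ (a k l)).fun_div hden ?_).congr_deriv ?_
    · simpa only [Function.update_eq_self] using hf k l
    · simp only [Function.update_eq_self]
      ring
  refine (HasDerivAt.fun_sum (u := Finset.univ) fun k _ => HasDerivAt.fun_sum
    (u := Finset.univ) fun l _ => hterm k l).congr_deriv ?_
  simp only [add_mul, Finset.sum_add_distrib, Pi.single_apply, ite_mul, one_mul, zero_mul,
    Finset.sum_ite_irrel, Finset.sum_const_zero, Finset.sum_ite_eq', Finset.mem_univ, if_true]
  rw [two_mul]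
  congr 1
  refine Finset.sum_congr rfl fun j _ => ?_
  rw [ha, neg_sub_comm]

end UpdateDeriv

section MatrixDeriv

variable {m n 𝕜 : Type*} [Fintype m] [Fintype n] [NontriviallyNormedField 𝕜]

theorem hasDerivAt_dotProduct_mulVec {H : 𝕜 → Matrix m n 𝕜} {H' : Matrix m n 𝕜} {z : 𝕜}
    (hH : ∀ a b, HasDerivAt (fun z => H z a b) (H' a b) z) (u : m → 𝕜) (v : n → 𝕜) :
    HasDerivAt (fun z => u ⬝ᵥ (H z *ᵥ v)) (u ⬝ᵥ (H' *ᵥ v)) z := by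
  simp only [dotProduct, mulVec]
  exact HasDerivAt.fun_sum fun a _ =>
    (HasDerivAt.fun_sum fun b _ => (hH a b).mul_const (v b)).const_mul (u a)

end MatrixDeriv

theorem Matrix.dotProduct_vecMulVec_mulVec {m n R : Type*} [Fintype m] [Fintype n] [CommSemiring R]
    (u a : m → R) (b v : n → R) :
    u ⬝ᵥ (vecMulVec a b *ᵥ v) = (u ⬝ᵥ a) * (b ⬝ᵥ v) := by
  rw [vecMulVec_mulVec, op_smul_eq_smul, dotProduct_smul, smul_eq_mul, mul_comm]

theorem h2_error_deriv_wrt_pole_general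
    {p m rr : ℕ}
    (H H' : ℂ → Matrix (Fin p) (Fin m) ℂ)
    (lam : Fin rr → ℂ) (ls : Fin rr → Fin p → ℂ) (rs : Fin rr → Fin m → ℂ)
    (hre : ∀ k, (lam k).re < 0)
    (i : Fin rr)
    (hH' : ∀ a b, HasDerivAt (fun z => H z a b) (H' (-(lam i)) a b) (-(lam i)))
    (Hr' : ℂ → Matrix (Fin p) (Fin m) ℂ)
    (hHr' : ∀ s, Hr' s = -∑ j, ((s - lam j) ^ 2)⁻¹ • vecMulVec (ls j) (rs j))
    (c : ℝ) :
    HasDerivAt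
      (fun t : ℂ =>
        (c : ℂ)
          - 2 * ∑ k, ls k ⬝ᵥ (H (-(Function.update lam i t k)) *ᵥ rs k)
          + ∑ k, ∑ l, (ls k ⬝ᵥ ls l) * (rs l ⬝ᵥ rs k) /
              (-(Function.update lam i t k) - Function.update lam i t l))
      (-2 * (ls i ⬝ᵥ ((Hr' (-(lam i)) - H' (-(lam i))) *ᵥ rs i)))
      (lam i) := by
  have hden : ∀ k l, -lam k - lam l ≠ 0 := fun k l h => by
    have := congrArg Complex.re h
    simp only [Complex.sub_re, Complex.neg_re, Complex.zero_re] at this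
    linarith [hre k, hre l]
  have hcross := hasDerivAt_sum_sum_div_neg_update_sub_update
    (fun k l => (ls k ⬝ᵥ ls l) * (rs l ⬝ᵥ rs k))
    (fun k l => by rw [dotProduct_comm (ls k), dotProduct_comm (rs l)]) lam hden i
  have hlin := hasDerivAt_sum_comp_update (fun k t => ls k ⬝ᵥ (H (-t) *ᵥ rs k)) lam i
    ((hasDerivAt_dotProduct_mulVec hH' (ls i) (rs i)).scomp (lam i) (hasDerivAt_neg (lam i)))
  have hHr'_form : ls i ⬝ᵥ (Hr' (-lam i) *ᵥ rs i)
      = -∑ j, (ls i ⬝ᵥ ls j) * (rs j ⬝ᵥ rs i) / (-lam i - lam j) ^ 2 := by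
    simp only [hHr', neg_mulVec, sum_mulVec, smul_mulVec, dotProduct_neg, dotProduct_sum,
      dotProduct_smul, dotProduct_vecMulVec_mulVec, smul_eq_mul, inv_mul_eq_div]
  refine (((hasDerivAt_const _ (c : ℂ)).sub (hlin.const_mul 2)).add hcross).congr_deriv ?_
  rw [sub_mulVec, dotProduct_sub, hHr'_form]
  simp only [neg_one_smul]
  ring

/-- Derivative of the H₂ error functional with respect to the pole `λᵢ`
(holding residue directions fixed), computed from the pole-residue error expansion
`J = ‖H‖² - 2 Σ_k ℓ_kᵀ H(-λ_k) r_k + Σ_{k,l} (ℓ_kᵀℓ_l)(r_lᵀr_k)/(-λ_k - λ_l)`: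
`∂J/∂λᵢ = -2 ℓᵢᵀ (H_r'(-λᵢ) - H'(-λᵢ)) rᵢ`, where
`H_r'(s) = -Σ_j ℓ_j r_jᵀ/(s - λ_j)²`. -/
theorem h2_error_deriv_wrt_pole
    {p m rr : ℕ}
    (H H' : ℂ → Matrix (Fin p) (Fin m) ℂ)
    (lam : Fin rr → ℂ) (ls : Fin rr → Fin p → ℂ) (rs : Fin rr → Fin m → ℂ)
    (hdist : Function.Injective lam)
    (hre : ∀ k, (lam k).re < 0)
    (i : Fin rr)
    (hH' : ∀ a b, HasDerivAt (fun z => H z a b) (H' (-(lam i)) a b) (-(lam i)))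
    (Hr' : ℂ → Matrix (Fin p) (Fin m) ℂ)
    (hHr' : ∀ s, Hr' s = -∑ j, ((s - lam j) ^ 2)⁻¹ • vecMulVec (ls j) (rs j))
    (c : ℝ) :
    HasDerivAt
      (fun t : ℂ =>
        (c : ℂ)
          - 2 * ∑ k, ls k ⬝ᵥ (H (-(Function.update lam i t k)) *ᵥ rs k)
          + ∑ k, ∑ l, (ls k ⬝ᵥ ls l) * (rs l ⬝ᵥ rs k) /
              (-(Function.update lam i t k) - Function.update lam i t l))
      (-2 * (ls i ⬝ᵥ ((Hr' (-(lam i)) - H' (-(lam i))) *ᵥ rs i)))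
      (lam i) :=
  h2_error_deriv_wrt_pole_general H H' lam ls rs hre i hH' Hr' hHr' c
end

section
/- Let H be a stable transfer function, H_r(s) = Σᵢ ℓᵢrᵢᵀ/(s − λᵢ) with distinct stable poles, and J = ‖H − H_r‖²_{H₂}. Then the gradient of J with respect to the right residue direction r_ℓ equals 2(ℓ_ℓᵀH_r(−λ_ℓ) − ℓ_ℓᵀH(−λ_ℓ))ᵀ, and the gradient with respect to the left residue direction ℓ_ℓ equals 2(H_r(−λ_ℓ)r_ℓ − H(−λ_ℓ)r_ℓ). Consequently, if J is stationary with respect to all residue directions and all poles, then H(−λ_k)r_k = H_r(−λ_k)r_k, ℓ_kᵀH(−λ_k) = ℓ_kᵀH_r(−λ_k), and ℓ_kᵀH'(−λ_k)r_k = ℓ_kᵀH_r'(−λ_k)r_k for all k. -/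
/-!
Along one coordinate of a residue direction, `J` is a constant, minus twice a linear form, plus a
quadratic form whose coefficient matrix `(ℓ_a ⬝ ℓ_b)/(-λ_a - λ_b)` (resp. `(r_b ⬝ r_a)/(-λ_a - λ_b)`)
is symmetric. Its derivative is therefore twice the bilinear form minus the linear form, evaluated
at the coordinate vector, and the bilinear part is exactly `ℓ_kᵀ H_r(-λ_k)` (resp. `H_r(-λ_k) r_k`).
Along a pole, `1/(-λ_a - λ_b)` differentiates to `1/(-λ_a - λ_b)²`, and these terms add up to
`-ℓ_kᵀ H_r'(-λ_k) r_k`. All three gradients are twice an interpolation defect, so stationarity is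
bitangential Hermite interpolation.
-/

open Matrix
open scoped Matrix

/-- The H₂ error functional in pole-residue variables:
`J = ‖H‖² - 2 Σ_k ℓ_kᵀ H(-λ_k) r_k + Σ_{k,l} (ℓ_kᵀℓ_l)(r_lᵀr_k)/(-λ_k - λ_l)`
(the constant `c = ‖H‖²_{H₂}` is irrelevant for differentiation). -/
noncomputable def h2J {p m rr : ℕ} (H : ℂ → Matrix (Fin p) (Fin m) ℂ) (c : ℝ)
    (lam : Fin rr → ℂ) (ls : Fin rr → Fin p → ℂ) (rs : Fin rr → Fin m → ℂ) : ℂ :=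
  (c : ℂ) - 2 * ∑ k, ls k ⬝ᵥ (H (-(lam k)) *ᵥ rs k)
    + ∑ k, ∑ l, (ls k ⬝ᵥ ls l) * (rs l ⬝ᵥ rs k) / (-(lam k) - lam l)

open Function

section Calculus

variable {𝕜 ι n : Type*} [NontriviallyNormedField 𝕜] [Fintype n] {t : 𝕜}

theorem hasDerivAt_update_update [DecidableEq ι] [DecidableEq n] (x : ι → n → 𝕜) (k : ι)
    (j : n) (t : 𝕜) :
    HasDerivAt (fun s => update x k (update (x k) j s))
      (Pi.single k (Pi.single j 1) : ι → n → 𝕜) t := by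
  rw [hasDerivAt_pi]
  intro a
  by_cases h : a = k
  · subst h; simpa using hasDerivAt_update (x a) j t
  · simpa [h] using hasDerivAt_const t (x a)

theorem HasDerivAt.dotProduct {v w : 𝕜 → n → 𝕜} {v' w' : n → 𝕜}
    (hv : HasDerivAt v v' t) (hw : HasDerivAt w w' t) :
    HasDerivAt (fun s => v s ⬝ᵥ w s) (v' ⬝ᵥ w t + v t ⬝ᵥ w') t := by
  rw [hasDerivAt_pi] at hv hw
  simpa only [_root_.dotProduct, ← Finset.sum_add_distrib] using
    HasDerivAt.fun_sum (u := Finset.univ) fun i _ => (hv i).fun_mul (hw i)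

variable [Fintype ι]

theorem HasDerivAt.sum_dotProduct (u : ι → n → 𝕜) {y : 𝕜 → ι → n → 𝕜} {y' : ι → n → 𝕜}
    (hy : HasDerivAt y y' t) :
    HasDerivAt (fun s => ∑ a, u a ⬝ᵥ y s a) (∑ a, u a ⬝ᵥ y' a) t := by
  simpa using HasDerivAt.fun_sum (u := Finset.univ) fun a _ =>
    (hasDerivAt_const t (u a)).dotProduct (hasDerivAt_pi.1 hy a)

theorem HasDerivAt.sum_sum_mul_dotProduct {G : ι → ι → 𝕜} (hG : ∀ a b, G a b = G b a)
    {y : 𝕜 → ι → n → 𝕜} {y' : ι → n → 𝕜} (hy : HasDerivAt y y' t) :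
    HasDerivAt (fun s => ∑ a, ∑ b, G a b * (y s b ⬝ᵥ y s a))
      (2 * ∑ a, (∑ b, G a b • y t b) ⬝ᵥ y' a) t := by
  have hya (a : ι) : HasDerivAt (fun s => y s a) (y' a) t := hasDerivAt_pi.1 hy a
  refine (HasDerivAt.fun_sum fun a _ => HasDerivAt.fun_sum fun b _ =>
    ((hya b).dotProduct (hya a)).const_mul (G a b)).congr_deriv ?_
  simp only [mul_add, Finset.sum_add_distrib, _root_.sum_dotProduct, smul_dotProduct, smul_eq_mul]
  rw [Finset.sum_comm (f := fun a b => G a b * (y' b ⬝ᵥ y t a))]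
  simp only [hG _ _, dotProduct_comm (y' _)]
  ring

theorem HasDerivAt.sum_comp_apply {f : ι → 𝕜 → 𝕜} {f' : ι → 𝕜} {μ : 𝕜 → ι → 𝕜}
    {μ' : ι → 𝕜} (hμ : HasDerivAt μ μ' t) (hf : ∀ a, HasDerivAt (f a) (f' a) (μ t a)) :
    HasDerivAt (fun s => ∑ a, f a (μ s a)) (∑ a, f' a * μ' a) t :=
  HasDerivAt.fun_sum fun a _ => (hf a).comp t (hasDerivAt_pi.1 hμ a)

theorem HasDerivAt.sum_sum_div_neg_sub {C : ι → ι → 𝕜} (hC : ∀ a b, C a b = C b a)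
    {μ : 𝕜 → ι → 𝕜} {μ' : ι → 𝕜} (hμ : HasDerivAt μ μ' t)
    (hden : ∀ a b, -μ t a - μ t b ≠ 0) :
    HasDerivAt (fun s => ∑ a, ∑ b, C a b / (-μ s a - μ s b))
      (2 * ∑ a, (∑ b, C a b / (-μ t a - μ t b) ^ 2) * μ' a) t := by
  have hμa (a : ι) : HasDerivAt (fun s => μ s a) (μ' a) t := hasDerivAt_pi.1 hμ a
  refine (HasDerivAt.fun_sum fun a _ => HasDerivAt.fun_sum fun b _ =>
    (hasDerivAt_const t (C a b)).div ((hμa a).neg.sub (hμa b)) (hden a b)).congr_deriv ?_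
  have hsymm (a b : ι) : C a b / (-μ t a - μ t b) ^ 2 = C b a / (-μ t b - μ t a) ^ 2 := by
    rw [hC, neg_sub_comm]
  calc ∑ a, ∑ b, (0 * (-μ t a - μ t b) - C a b * (-μ' a - μ' b)) / (-μ t a - μ t b) ^ 2
      = ∑ a, ∑ b, (C a b / (-μ t a - μ t b) ^ 2 * μ' a
          + C a b / (-μ t a - μ t b) ^ 2 * μ' b) :=
        Finset.sum_congr rfl fun a _ => Finset.sum_congr rfl fun b _ => by ring
    _ = 2 * ∑ a, (∑ b, C a b / (-μ t a - μ t b) ^ 2) * μ' a := by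
        simp only [Finset.sum_add_distrib]
        rw [Finset.sum_comm (f := fun a b => C a b / (-μ t a - μ t b) ^ 2 * μ' b)]
        simp only [hsymm _ _, Finset.sum_mul]
        ring

theorem hasDerivAt_dotProduct_mulVec_s9 {M : 𝕜 → Matrix ι n 𝕜} {M' : Matrix ι n 𝕜} {z : 𝕜}
    (hM : ∀ i j, HasDerivAt (fun z => M z i j) (M' i j) z) (u : ι → 𝕜) (v : n → 𝕜) :
    HasDerivAt (fun z => u ⬝ᵥ (M z *ᵥ v)) (u ⬝ᵥ (M' *ᵥ v)) z := by
  simp only [_root_.dotProduct, mulVec, Finset.mul_sum]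
  exact HasDerivAt.fun_sum fun i _ => HasDerivAt.fun_sum fun j _ =>
    (((hM i j).mul_const (v j))).const_mul (u i)

end Calculus

section H2Error

variable {p m rr : ℕ} (H : ℂ → Matrix (Fin p) (Fin m) ℂ) (c : ℝ) (lam : Fin rr → ℂ)
  (ls : Fin rr → Fin p → ℂ) (rs : Fin rr → Fin m → ℂ)

theorem hasDerivAt_h2J_rs (k : Fin rr) (j : Fin m) :
    HasDerivAt (fun t => h2J H c lam ls (update rs k (update (rs k) j t)))
      (2 * ((ls k ᵥ* ∑ b, (-(lam k) - lam b)⁻¹ • vecMulVec (ls b) (rs b)) j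
        - (ls k ᵥ* H (-(lam k))) j)) (rs k j) := by
  set G : Fin rr → Fin rr → ℂ := fun a b => (ls a ⬝ᵥ ls b) / (-(lam a) - lam b)
  have hG (a b : Fin rr) : G a b = G b a := by simp only [G, dotProduct_comm, neg_sub_comm]
  have hJ (y : Fin rr → Fin m → ℂ) : h2J H c lam ls y
      = c - 2 * ∑ a, (ls a ᵥ* H (-(lam a))) ⬝ᵥ y a + ∑ a, ∑ b, G a b * (y b ⬝ᵥ y a) := by
    simp only [h2J, G, dotProduct_mulVec, mul_div_right_comm]
  have hy := hasDerivAt_update_update rs k j (rs k j)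
  simp only [hJ]
  refine ((((hy.sum_dotProduct fun a => ls a ᵥ* H (-(lam a))).const_mul 2).const_sub _).fun_add
    (hy.sum_sum_mul_dotProduct hG)).congr_deriv ?_
  simp only [Pi.single_apply, apply_ite, dotProduct_single, mul_one, dotProduct_zero,
    Finset.sum_ite_eq', Finset.mem_univ, ↓reduceIte, div_eq_inv_mul, update_eq_self,
    Finset.sum_apply, Pi.smul_apply, smul_eq_mul, mul_assoc, vecMul_sum, vecMul_smul,
    vecMul_vecMulVec, G]
  ring

theorem hasDerivAt_h2J_ls (k : Fin rr) (j : Fin p) :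
    HasDerivAt (fun t => h2J H c lam (update ls k (update (ls k) j t)) rs)
      (2 * (((∑ b, (-(lam k) - lam b)⁻¹ • vecMulVec (ls b) (rs b)) *ᵥ rs k) j
        - (H (-(lam k)) *ᵥ rs k) j)) (ls k j) := by
  set G : Fin rr → Fin rr → ℂ := fun a b => (rs b ⬝ᵥ rs a) / (-(lam a) - lam b)
  have hG (a b : Fin rr) : G a b = G b a := by simp only [G, dotProduct_comm, neg_sub_comm]
  have hJ (y : Fin rr → Fin p → ℂ) : h2J H c lam y rs
      = c - 2 * ∑ a, (H (-(lam a)) *ᵥ rs a) ⬝ᵥ y a + ∑ a, ∑ b, G a b * (y b ⬝ᵥ y a) := by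
    simp only [h2J, G, dotProduct_comm (y _) (_ *ᵥ _)]
    congr 1
    refine Finset.sum_congr rfl fun a _ => Finset.sum_congr rfl fun b _ => ?_
    rw [dotProduct_comm (y a)]
    ring
  have hy := hasDerivAt_update_update ls k j (ls k j)
  simp only [hJ]
  refine ((((hy.sum_dotProduct fun a => H (-(lam a)) *ᵥ rs a).const_mul 2).const_sub _).fun_add
    (hy.sum_sum_mul_dotProduct hG)).congr_deriv ?_
  simp only [Pi.single_apply, apply_ite, dotProduct_single, mul_one, dotProduct_zero,
    Finset.sum_ite_eq', Finset.mem_univ, ↓reduceIte, div_eq_inv_mul, update_eq_self,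
    Finset.sum_apply, Pi.smul_apply, smul_eq_mul, mul_assoc, sum_mulVec, smul_mulVec,
    vecMulVec_mulVec, op_smul_eq_smul, G]
  ring

theorem hasDerivAt_h2J_lam (H' : ℂ → Matrix (Fin p) (Fin m) ℂ)
    (hH' : ∀ a i j, HasDerivAt (fun z => H z i j) (H' (-(lam a)) i j) (-(lam a)))
    (hden : ∀ a b, -(lam a) - lam b ≠ 0) (k : Fin rr) :
    HasDerivAt (fun t => h2J H c (update lam k t) ls rs)
      (2 * (ls k ⬝ᵥ (H' (-(lam k)) *ᵥ rs k)
        - ls k ⬝ᵥ ((-∑ b, ((-(lam k) - lam b) ^ 2)⁻¹ • vecMulVec (ls b) (rs b)) *ᵥ rs k)))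
      (lam k) := by
  set C : Fin rr → Fin rr → ℂ := fun a b => (ls a ⬝ᵥ ls b) * (rs b ⬝ᵥ rs a)
  have hC (a b : Fin rr) : C a b = C b a := by
    simp only [C, dotProduct_comm (ls a), dotProduct_comm (rs a)]
  have hf (a : Fin rr) : HasDerivAt (fun s => ls a ⬝ᵥ (H (-s) *ᵥ rs a))
      (-(ls a ⬝ᵥ (H' (-(lam a)) *ᵥ rs a))) (lam a) := by
    simpa [Function.comp_def] using
      (hasDerivAt_dotProduct_mulVec_s9 (hH' a) (ls a) (rs a)).comp (lam a) (hasDerivAt_neg (lam a))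
  have hμ := hasDerivAt_update lam k (lam k)
  rw [← update_eq_self k lam] at hf hden
  refine ((((hμ.sum_comp_apply hf).const_mul 2).const_sub _).fun_add
    (hμ.sum_sum_div_neg_sub hC hden)).congr_deriv ?_
  simp only [update_eq_self, Pi.single_apply, mul_ite, mul_one, mul_zero, Finset.sum_ite_eq',
    Finset.mem_univ, ↓reduceIte, mul_neg, neg_neg, div_eq_inv_mul, neg_mulVec, sum_mulVec,
    smul_mulVec, vecMulVec_mulVec, op_smul_eq_smul, dotProduct_neg, dotProduct_sum,
    dotProduct_smul, smul_eq_mul, sub_neg_eq_add, C, mul_comm (rs _ ⬝ᵥ rs k)]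
  ring

end H2Error

theorem h2_gradients_and_optimality_conditions_general
    {p m rr : ℕ}
    (H H' : ℂ → Matrix (Fin p) (Fin m) ℂ)
    (lam : Fin rr → ℂ) (ls : Fin rr → Fin p → ℂ) (rs : Fin rr → Fin m → ℂ)
    (hre : ∀ k, (lam k).re < 0)
    (hH' : ∀ k a b, HasDerivAt (fun z => H z a b) (H' (-(lam k)) a b) (-(lam k)))
    (Hr Hr' : ℂ → Matrix (Fin p) (Fin m) ℂ)
    (hHr : ∀ s, Hr s = ∑ j, (s - lam j)⁻¹ • vecMulVec (ls j) (rs j))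
    (hHr' : ∀ s, Hr' s = -∑ j, ((s - lam j) ^ 2)⁻¹ • vecMulVec (ls j) (rs j))
    (c : ℝ) :
    (∀ (k : Fin rr) (j : Fin m),
      HasDerivAt
        (fun t : ℂ => h2J H c lam ls (Function.update rs k (Function.update (rs k) j t)))
        (2 * ((ls k ᵥ* Hr (-(lam k))) j - (ls k ᵥ* H (-(lam k))) j))
        (rs k j)) ∧
    (∀ (k : Fin rr) (j : Fin p),
      HasDerivAt
        (fun t : ℂ => h2J H c lam (Function.update ls k (Function.update (ls k) j t)) rs)
        (2 * ((Hr (-(lam k)) *ᵥ rs k) j - (H (-(lam k)) *ᵥ rs k) j))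
        (ls k j)) ∧
    ((∀ (k : Fin rr) (j : Fin m),
        deriv (fun t : ℂ =>
          h2J H c lam ls (Function.update rs k (Function.update (rs k) j t))) (rs k j) = 0) →
     (∀ (k : Fin rr) (j : Fin p),
        deriv (fun t : ℂ =>
          h2J H c lam (Function.update ls k (Function.update (ls k) j t)) rs) (ls k j) = 0) →
     (∀ k : Fin rr,
        deriv (fun t : ℂ => h2J H c (Function.update lam k t) ls rs) (lam k) = 0) →
     (∀ k, H (-(lam k)) *ᵥ rs k = Hr (-(lam k)) *ᵥ rs k) ∧
     (∀ k, ls k ᵥ* H (-(lam k)) = ls k ᵥ* Hr (-(lam k))) ∧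
     (∀ k, ls k ⬝ᵥ (H' (-(lam k)) *ᵥ rs k) = ls k ⬝ᵥ (Hr' (-(lam k)) *ᵥ rs k))) := by
  have hden (a b : Fin rr) : -(lam a) - lam b ≠ 0 := fun h => by
    have := congrArg Complex.re h
    simp only [Complex.sub_re, Complex.neg_re, Complex.zero_re] at this
    linarith [hre a, hre b]
  have gradR (k j) := hHr (-(lam k)) ▸ hasDerivAt_h2J_rs H c lam ls rs k j
  have gradL (k j) := hHr (-(lam k)) ▸ hasDerivAt_h2J_ls H c lam ls rs k j
  have gradP (k) := hHr' (-(lam k)) ▸ hasDerivAt_h2J_lam H c lam ls rs H' hH' hden k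
  refine ⟨gradR, gradL, fun hR hL hP => ⟨fun k => funext fun j => ?_, fun k => funext fun j => ?_,
    fun k => ?_⟩⟩
  · simpa [(gradL k j).deriv, sub_eq_zero, eq_comm] using hL k j
  · simpa [(gradR k j).deriv, sub_eq_zero, eq_comm] using hR k j
  · simpa [(gradP k).deriv, sub_eq_zero] using hP k

/-- Gradients of the H₂ error with respect to the residue directions, and the
resulting first-order (Meier–Luenberger) interpolatory optimality conditions:
`∇_{r_ℓ} J = 2(ℓ_ℓᵀH_r(-λ_ℓ) - ℓ_ℓᵀH(-λ_ℓ))ᵀ`, `∇_{ℓ_ℓ} J = 2(H_r(-λ_ℓ)r_ℓ - H(-λ_ℓ)r_ℓ)`,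
and stationarity with respect to all residue directions and all poles implies the
bitangential Hermite interpolation conditions. -/
theorem h2_gradients_and_optimality_conditions
    {p m rr : ℕ}
    (H H' : ℂ → Matrix (Fin p) (Fin m) ℂ)
    (lam : Fin rr → ℂ) (ls : Fin rr → Fin p → ℂ) (rs : Fin rr → Fin m → ℂ)
    (hdist : Function.Injective lam)
    (hre : ∀ k, (lam k).re < 0)
    (hH' : ∀ k a b, HasDerivAt (fun z => H z a b) (H' (-(lam k)) a b) (-(lam k)))
    (Hr Hr' : ℂ → Matrix (Fin p) (Fin m) ℂ)
    (hHr : ∀ s, Hr s = ∑ j, (s - lam j)⁻¹ • vecMulVec (ls j) (rs j))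
    (hHr' : ∀ s, Hr' s = -∑ j, ((s - lam j) ^ 2)⁻¹ • vecMulVec (ls j) (rs j))
    (c : ℝ) :
    (∀ (k : Fin rr) (j : Fin m),
      HasDerivAt
        (fun t : ℂ => h2J H c lam ls (Function.update rs k (Function.update (rs k) j t)))
        (2 * ((ls k ᵥ* Hr (-(lam k))) j - (ls k ᵥ* H (-(lam k))) j))
        (rs k j)) ∧
    (∀ (k : Fin rr) (j : Fin p),
      HasDerivAt
        (fun t : ℂ => h2J H c lam (Function.update ls k (Function.update (ls k) j t)) rs)
        (2 * ((Hr (-(lam k)) *ᵥ rs k) j - (H (-(lam k)) *ᵥ rs k) j))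
        (ls k j)) ∧
    ((∀ (k : Fin rr) (j : Fin m),
        deriv (fun t : ℂ =>
          h2J H c lam ls (Function.update rs k (Function.update (rs k) j t))) (rs k j) = 0) →
     (∀ (k : Fin rr) (j : Fin p),
        deriv (fun t : ℂ =>
          h2J H c lam (Function.update ls k (Function.update (ls k) j t)) rs) (ls k j) = 0) →
     (∀ k : Fin rr,
        deriv (fun t : ℂ => h2J H c (Function.update lam k t) ls rs) (lam k) = 0) →
     (∀ k, H (-(lam k)) *ᵥ rs k = Hr (-(lam k)) *ᵥ rs k) ∧
     (∀ k, ls k ᵥ* H (-(lam k)) = ls k ᵥ* Hr (-(lam k))) ∧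
     (∀ k, ls k ⬝ᵥ (H' (-(lam k)) *ᵥ rs k) = ls k ⬝ᵥ (Hr' (-(lam k)) *ᵥ rs k))) :=
  h2_gradients_and_optimality_conditions_general H H' lam ls rs hre hH' Hr Hr' hHr hHr' c
end

section
/- Let H be analytic at distinct points σ₁, …, σ_r with directions rᵢ ∈ ℂᵐ, ℓᵢ ∈ ℂᵖ, and let E_r, A_r, B_r, C_r be the Loewner matrices defined by (E_r)_{ij} = −ℓᵢᵀ(H(σᵢ)−H(σⱼ))rⱼ/(σᵢ−σⱼ) (i≠j), (E_r)_{ii} = −ℓᵢᵀH'(σᵢ)rᵢ, (A_r)_{ij} = −ℓᵢᵀ(σᵢH(σᵢ)−σⱼH(σⱼ))rⱼ/(σᵢ−σⱼ) (i≠j), (A_r)_{ii} = −ℓᵢᵀ(H(σᵢ)+σᵢH'(σᵢ))rᵢ, C_r = [H(σ₁)r₁,…,H(σ_r)r_r], and B_r with i-th row ℓᵢᵀH(σᵢ). If σ_kE_r − A_r is invertible, then H_r(s) = C_r(sE_r − A_r)⁻¹B_r satisfies H_r(σ_k)r_k = H(σ_k)r_k. -/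
open Matrix
open scoped Matrix

/-!
In the pencil `σ_k E_r - A_r` the derivative terms of the diagonal entry cancel and the divided
differences of the off-diagonal entries telescope, so its `k`-th column is `B_r r_k`. Hence
`(σ_k E_r - A_r)⁻¹ B_r r_k = e_k`, and `C_r e_k = H(σ_k) r_k`.
-/

namespace Loewner

variable {K : Type*} [Field K] {ι p m : Type*} [Fintype m]

def loewnerC (H : K → Matrix p m K) (σs : ι → K) (rs : ι → m → K) : Matrix p ι K :=
  Matrix.of fun i j => (H (σs j) *ᵥ rs j) i

theorem loewnerC_mulVec_single_one [Fintype ι] [DecidableEq ι] (H : K → Matrix p m K)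
    (σs : ι → K) (rs : ι → m → K) (k : ι) :
    loewnerC H σs rs *ᵥ Pi.single k 1 = H (σs k) *ᵥ rs k := by
  rw [mulVec_single_one]
  rfl

variable [Fintype p]

def loewnerB (H : K → Matrix p m K) (σs : ι → K) (ls : ι → p → K) : Matrix ι m K :=
  Matrix.of fun i j => (ls i ᵥ* H (σs i)) j

theorem loewnerB_mulVec_apply (H : K → Matrix p m K) (σs : ι → K) (ls : ι → p → K)
    (v : m → K) (i : ι) :
    (loewnerB H σs ls *ᵥ v) i = ls i ⬝ᵥ (H (σs i) *ᵥ v) := by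
  rw [dotProduct_mulVec]
  rfl

variable [DecidableEq ι]

def loewnerE (H H' : K → Matrix p m K) (σs : ι → K) (ls : ι → p → K)
    (rs : ι → m → K) : Matrix ι ι K :=
  Matrix.of fun i j =>
    if i = j then -(ls i ⬝ᵥ (H' (σs i) *ᵥ rs i))
    else -(ls i ⬝ᵥ ((H (σs i) - H (σs j)) *ᵥ rs j)) / (σs i - σs j)

def loewnerA (H H' : K → Matrix p m K) (σs : ι → K) (ls : ι → p → K)
    (rs : ι → m → K) : Matrix ι ι K :=
  Matrix.of fun i j =>
    if i = j then -(ls i ⬝ᵥ ((H (σs i) + σs i • H' (σs i)) *ᵥ rs i))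
    else -(ls i ⬝ᵥ ((σs i • H (σs i) - σs j • H (σs j)) *ᵥ rs j)) / (σs i - σs j)

theorem loewner_pencil_apply_self (H H' : K → Matrix p m K) (σs : ι → K) (ls : ι → p → K)
    (rs : ι → m → K) (k : ι) :
    (σs k • loewnerE H H' σs ls rs - loewnerA H H' σs ls rs) k k
      = ls k ⬝ᵥ (H (σs k) *ᵥ rs k) := by
  simp only [loewnerE, loewnerA, Matrix.sub_apply, Matrix.smul_apply, of_apply, if_pos,
    smul_eq_mul, add_mulVec, smul_mulVec, dotProduct_add, dotProduct_smul]
  ring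

theorem loewner_pencil_apply_of_ne (H H' : K → Matrix p m K) {σs : ι → K}
    (ls : ι → p → K) (rs : ι → m → K) {i k : ι} (hσ : σs i ≠ σs k) :
    (σs k • loewnerE H H' σs ls rs - loewnerA H H' σs ls rs) i k
      = ls i ⬝ᵥ (H (σs i) *ᵥ rs k) := by
  have hik : i ≠ k := fun h => hσ (congrArg σs h)
  have hsub : σs i - σs k ≠ 0 := sub_ne_zero.mpr hσ
  simp only [loewnerE, loewnerA, Matrix.sub_apply, Matrix.smul_apply, of_apply, if_neg hik,
    smul_eq_mul, sub_mulVec, smul_mulVec, dotProduct_sub, dotProduct_smul]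
  field_simp
  ring

theorem loewner_pencil_mulVec_single_one [Fintype ι] (H H' : K → Matrix p m K) {σs : ι → K}
    (hσ : Function.Injective σs) (ls : ι → p → K) (rs : ι → m → K) (k : ι) :
    (σs k • loewnerE H H' σs ls rs - loewnerA H H' σs ls rs) *ᵥ Pi.single k 1
      = loewnerB H σs ls *ᵥ rs k := by
  ext i
  rw [mulVec_single_one, col_apply, loewnerB_mulVec_apply]
  obtain rfl | hik := eq_or_ne i k
  · exact loewner_pencil_apply_self H H' σs ls rs i
  · exact loewner_pencil_apply_of_ne H H' ls rs (hσ.ne hik)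

end Loewner

open Loewner in
theorem loewner_right_tangential_interpolation_general
    {p m rr : ℕ}
    (H H' : ℂ → Matrix (Fin p) (Fin m) ℂ)
    (σs : Fin rr → ℂ) (hdist : Function.Injective σs)
    (ls : Fin rr → Fin p → ℂ) (rs : Fin rr → Fin m → ℂ)
    (Er Ar : Matrix (Fin rr) (Fin rr) ℂ) (Br : Matrix (Fin rr) (Fin m) ℂ)
    (Cr : Matrix (Fin p) (Fin rr) ℂ)
    (hEr : Er = Matrix.of fun i j =>
      if i = j then -(ls i ⬝ᵥ (H' (σs i) *ᵥ rs i))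
      else -(ls i ⬝ᵥ ((H (σs i) - H (σs j)) *ᵥ rs j)) / (σs i - σs j))
    (hAr : Ar = Matrix.of fun i j =>
      if i = j then -(ls i ⬝ᵥ ((H (σs i) + σs i • H' (σs i)) *ᵥ rs i))
      else -(ls i ⬝ᵥ ((σs i • H (σs i) - σs j • H (σs j)) *ᵥ rs j)) / (σs i - σs j))
    (hBr : Br = Matrix.of fun i j => (ls i ᵥ* H (σs i)) j)
    (hCr : Cr = Matrix.of fun i j => (H (σs j) *ᵥ rs j) i)
    (k : Fin rr) (hk : IsUnit (σs k • Er - Ar).det) :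
    (Cr * (σs k • Er - Ar)⁻¹ * Br) *ᵥ rs k = H (σs k) *ᵥ rs k := by
  obtain rfl : Er = loewnerE H H' σs ls rs := hEr
  obtain rfl : Ar = loewnerA H H' σs ls rs := hAr
  obtain rfl : Br = loewnerB H σs ls := hBr
  obtain rfl : Cr = loewnerC H σs rs := hCr
  have := invertibleOfIsUnitDet _ hk
  rw [← mulVec_mulVec, ← mulVec_mulVec,
    inv_mulVec_eq_vec (loewner_pencil_mulVec_single_one H H' hdist ls rs k).symm]
  exact loewnerC_mulVec_single_one H σs rs k

/-- Right tangential interpolation property of the Loewner realization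
(Mayo–Antoulas): the rational function `H_r(s) = C_r (sE_r - A_r)⁻¹ B_r`
built from the Loewner matrices satisfies `H_r(σ_k) r_k = H(σ_k) r_k`
whenever `σ_k E_r - A_r` is invertible. -/
theorem loewner_right_tangential_interpolation
    {p m rr : ℕ}
    (H H' : ℂ → Matrix (Fin p) (Fin m) ℂ)
    (σs : Fin rr → ℂ) (hdist : Function.Injective σs)
    (ls : Fin rr → Fin p → ℂ) (rs : Fin rr → Fin m → ℂ)
    (hH' : ∀ (i : Fin rr) (a : Fin p) (b : Fin m),
      HasDerivAt (fun z => H z a b) (H' (σs i) a b) (σs i))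
    (Er Ar : Matrix (Fin rr) (Fin rr) ℂ) (Br : Matrix (Fin rr) (Fin m) ℂ)
    (Cr : Matrix (Fin p) (Fin rr) ℂ)
    (hEr : Er = Matrix.of fun i j =>
      if i = j then -(ls i ⬝ᵥ (H' (σs i) *ᵥ rs i))
      else -(ls i ⬝ᵥ ((H (σs i) - H (σs j)) *ᵥ rs j)) / (σs i - σs j))
    (hAr : Ar = Matrix.of fun i j =>
      if i = j then -(ls i ⬝ᵥ ((H (σs i) + σs i • H' (σs i)) *ᵥ rs i))
      else -(ls i ⬝ᵥ ((σs i • H (σs i) - σs j • H (σs j)) *ᵥ rs j)) / (σs i - σs j))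
    (hBr : Br = Matrix.of fun i j => (ls i ᵥ* H (σs i)) j)
    (hCr : Cr = Matrix.of fun i j => (H (σs j) *ᵥ rs j) i)
    (k : Fin rr) (hk : IsUnit (σs k • Er - Ar).det) :
    (Cr * (σs k • Er - Ar)⁻¹ * Br) *ᵥ rs k = H (σs k) *ᵥ rs k :=
  loewner_right_tangential_interpolation_general H H' σs hdist ls rs Er Ar Br Cr hEr hAr hBr hCr k
    hk
end

section
/- Let K(s) ∈ ℂⁿˣⁿ, B(s) ∈ ℂⁿˣᵐ, C(s) ∈ ℂᵖˣⁿ be matrix-valued functions, D ∈ ℂᵖˣᵐ, and H(s) = C(s)K(s)⁻¹B(s) + D where K(s) is invertible. Let V, W ∈ ℂⁿˣʳ and define the reduced system K_r(s) = WᵀK(s)V, B_r(s) = WᵀB(s), C_r(s) = C(s)V, H_r(s) = C_r(s)K_r(s)⁻¹B_r(s) + D. Fix σ ∈ ℂ with K(σ) and K_r(σ) invertible and a nonzero r ∈ ℂᵐ. If K(σ)⁻¹B(σ)r lies in the column space of V, then H(σ)r = H_r(σ)r. -/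
open Matrix

theorem Matrix.mulVec_galerkin_solve_eq_of_mulVec_eq {R ι κ : Type*} [CommRing R]
    [Fintype ι] [DecidableEq ι] [Fintype κ] [DecidableEq κ]
    {K : Matrix ι ι R} {V : Matrix ι κ R} {L : Matrix κ ι R}
    (hK : IsUnit K.det) (hLKV : IsUnit (L * K * V).det) {b : ι → R} {c : κ → R}
    (hc : V *ᵥ c = K⁻¹ *ᵥ b) :
    V *ᵥ ((L * K * V)⁻¹ *ᵥ (L *ᵥ b)) = K⁻¹ *ᵥ b := by
  have hreduced : (L * K * V) *ᵥ c = L *ᵥ b := by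
    rw [← mulVec_mulVec, hc, mulVec_mulVec, Matrix.mul_assoc, mul_nonsing_inv _ hK, Matrix.mul_one]
  rw [← hreduced, mulVec_mulVec _ _ (L * K * V), nonsing_inv_mul _ hLKV, one_mulVec, hc]

theorem coprime_right_tangential_interpolation_general
    {n m p r : ℕ}
    (K : ℂ → Matrix (Fin n) (Fin n) ℂ)
    (B : ℂ → Matrix (Fin n) (Fin m) ℂ)
    (C : ℂ → Matrix (Fin p) (Fin n) ℂ)
    (D : Matrix (Fin p) (Fin m) ℂ)
    (V W : Matrix (Fin n) (Fin r) ℂ)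
    (σ : ℂ)
    (hK : IsUnit (K σ).det)
    (hKr : IsUnit (Wᵀ * K σ * V).det)
    (rdir : Fin m → ℂ)
    (hran : ∃ c : Fin r → ℂ, V *ᵥ c = (K σ)⁻¹ *ᵥ (B σ *ᵥ rdir)) :
    (C σ * (K σ)⁻¹ * B σ + D) *ᵥ rdir
      = ((C σ * V) * (Wᵀ * K σ * V)⁻¹ * (Wᵀ * B σ) + D) *ᵥ rdir := by
  obtain ⟨c, hc⟩ := hran
  have hsolve := mulVec_galerkin_solve_eq_of_mulVec_eq hK hKr hc
  simp only [add_mulVec, ← mulVec_mulVec] at hsolve ⊢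
  rw [hsolve]

/-- Right tangential interpolation for generalized coprime representations:
for `H(s) = C(s) K(s)⁻¹ B(s) + D` and the projected reduced model
`H_r(s) = C(s)V (Wᵀ K(s) V)⁻¹ Wᵀ B(s) + D`, if `K(σ)⁻¹ B(σ) r` lies in the
column space of `V`, then `H(σ) r = H_r(σ) r`. -/
theorem coprime_right_tangential_interpolation
    {n m p r : ℕ}
    (K : ℂ → Matrix (Fin n) (Fin n) ℂ)
    (B : ℂ → Matrix (Fin n) (Fin m) ℂ)
    (C : ℂ → Matrix (Fin p) (Fin n) ℂ)
    (D : Matrix (Fin p) (Fin m) ℂ)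
    (V W : Matrix (Fin n) (Fin r) ℂ)
    (σ : ℂ)
    (hK : IsUnit (K σ).det)
    (hKr : IsUnit (Wᵀ * K σ * V).det)
    (rdir : Fin m → ℂ) (hrdir : rdir ≠ 0)
    (hran : ∃ c : Fin r → ℂ, V *ᵥ c = (K σ)⁻¹ *ᵥ (B σ *ᵥ rdir)) :
    (C σ * (K σ)⁻¹ * B σ + D) *ᵥ rdir
      = ((C σ * V) * (Wᵀ * K σ * V)⁻¹ * (Wᵀ * B σ) + D) *ᵥ rdir :=
  coprime_right_tangential_interpolation_general K B C D V W σ hK hKr rdir hran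
end

section
/- In the generalized coprime setting H(s) = C(s)K(s)⁻¹B(s) + D with reduced model K_r(s) = WᵀK(s)V, B_r(s) = WᵀB(s), C_r(s) = C(s)V, H_r(s) = C_r(s)K_r(s)⁻¹B_r(s) + D: fix μ ∈ ℂ with K(μ), K_r(μ) invertible and nonzero ℓ ∈ ℂᵖ. If (ℓᵀC(μ)K(μ)⁻¹)ᵀ lies in the column space of W, then ℓᵀH(μ) = ℓᵀH_r(μ). -/
open Matrix
open scoped Matrix

/-- Left tangential interpolation for generalized coprime representations:
for `H(s) = C(s) K(s)⁻¹ B(s) + D` and the projected reduced model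
`H_r(s) = C(s)V (Wᵀ K(s) V)⁻¹ Wᵀ B(s) + D`, if `(ℓᵀ C(μ) K(μ)⁻¹)ᵀ` lies in the
column space of `W`, then `ℓᵀ H(μ) = ℓᵀ H_r(μ)`. -/
theorem coprime_left_tangential_interpolation
    {n m p r : ℕ}
    (K : ℂ → Matrix (Fin n) (Fin n) ℂ)
    (B : ℂ → Matrix (Fin n) (Fin m) ℂ)
    (C : ℂ → Matrix (Fin p) (Fin n) ℂ)
    (D : Matrix (Fin p) (Fin m) ℂ)
    (V W : Matrix (Fin n) (Fin r) ℂ)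
    (μ : ℂ)
    (hK : IsUnit (K μ).det)
    (hKr : IsUnit (Wᵀ * K μ * V).det)
    (ldir : Fin p → ℂ) (hldir : ldir ≠ 0)
    (hran : ∃ c : Fin r → ℂ, W *ᵥ c = (C μ * (K μ)⁻¹)ᵀ *ᵥ ldir) :
    ldir ᵥ* (C μ * (K μ)⁻¹ * B μ + D)
      = ldir ᵥ* ((C μ * V) * (Wᵀ * K μ * V)⁻¹ * (Wᵀ * B μ) + D) := by
  obtain ⟨c, hc⟩ := hran
  have key : ldir ᵥ* (C μ * (K μ)⁻¹) = c ᵥ* Wᵀ := by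
    rw [vecMul_transpose, hc, mulVec_transpose]
  have hCV : ldir ᵥ* (C μ * V) = c ᵥ* (Wᵀ * K μ * V) := by
    have : C μ * V = (C μ * (K μ)⁻¹) * (K μ * V) := by
      rw [← Matrix.mul_assoc, Matrix.mul_assoc (C μ), Matrix.nonsing_inv_mul _ hK,
        Matrix.mul_one]
    rw [this, ← vecMul_vecMul, key, vecMul_vecMul, Matrix.mul_assoc]
  have hinv : ldir ᵥ* (C μ * V) ᵥ* (Wᵀ * K μ * V)⁻¹ = c := by
    rw [hCV, vecMul_vecMul, Matrix.mul_nonsing_inv _ hKr, vecMul_one]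
  have main : ldir ᵥ* (C μ * V * (Wᵀ * K μ * V)⁻¹ * (Wᵀ * B μ))
      = ldir ᵥ* (C μ * (K μ)⁻¹ * B μ) := by
    calc ldir ᵥ* (C μ * V * (Wᵀ * K μ * V)⁻¹ * (Wᵀ * B μ))
        = (ldir ᵥ* (C μ * V) ᵥ* (Wᵀ * K μ * V)⁻¹) ᵥ* (Wᵀ * B μ) := by
          rw [vecMul_vecMul, vecMul_vecMul, Matrix.mul_assoc]
      _ = c ᵥ* (Wᵀ * B μ) := by rw [hinv]
      _ = (c ᵥ* Wᵀ) ᵥ* B μ := by rw [vecMul_vecMul]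
      _ = ldir ᵥ* (C μ * (K μ)⁻¹ * B μ) := by rw [← key, vecMul_vecMul]
  rw [vecMul_add, vecMul_add, main]
end

section
/- In the generalized coprime setting H(s) = C(s)K(s)⁻¹B(s) + D with K, B, C differentiable at σ ∈ ℂ, K(σ) and K_r(σ) = WᵀK(σ)V invertible, and nonzero directions r ∈ ℂᵐ, ℓ ∈ ℂᵖ: if both K(σ)⁻¹B(σ)r ∈ Ran(V) and (ℓᵀC(σ)K(σ)⁻¹)ᵀ ∈ Ran(W), then ℓᵀH'(σ)r = ℓᵀH_r'(σ)r, where H'(s) = C'(s)K(s)⁻¹B(s) − C(s)K(s)⁻¹K'(s)K(s)⁻¹B(s) + C(s)K(s)⁻¹B'(s). -/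
open Matrix
open scoped Matrix

/-- Bitangential Hermite interpolation for generalized coprime representations:
if `K(σ)⁻¹B(σ)r ∈ Ran(V)` and `(ℓᵀC(σ)K(σ)⁻¹)ᵀ ∈ Ran(W)`, then
`ℓᵀ H'(σ) r = ℓᵀ H_r'(σ) r`, where
`H'(s) = C'(s)K(s)⁻¹B(s) - C(s)K(s)⁻¹K'(s)K(s)⁻¹B(s) + C(s)K(s)⁻¹B'(s)`
and analogously for the reduced quantities `K_r' = WᵀK'V`, `B_r' = WᵀB'`, `C_r' = C'V`. -/
theorem coprime_bitangential_hermite_interpolation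
    {n m p r : ℕ}
    (K K' : ℂ → Matrix (Fin n) (Fin n) ℂ)
    (B B' : ℂ → Matrix (Fin n) (Fin m) ℂ)
    (C C' : ℂ → Matrix (Fin p) (Fin n) ℂ)
    (D : Matrix (Fin p) (Fin m) ℂ)
    (V W : Matrix (Fin n) (Fin r) ℂ)
    (σ : ℂ)
    (hKd : ∀ i j, HasDerivAt (fun s => K s i j) (K' σ i j) σ)
    (hBd : ∀ i j, HasDerivAt (fun s => B s i j) (B' σ i j) σ)
    (hCd : ∀ i j, HasDerivAt (fun s => C s i j) (C' σ i j) σ)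
    (hK : IsUnit (K σ).det)
    (hKr : IsUnit (Wᵀ * K σ * V).det)
    (rdir : Fin m → ℂ) (hrdir : rdir ≠ 0)
    (ldir : Fin p → ℂ) (hldir : ldir ≠ 0)
    (hranV : ∃ c : Fin r → ℂ, V *ᵥ c = (K σ)⁻¹ *ᵥ (B σ *ᵥ rdir))
    (hranW : ∃ c : Fin r → ℂ, W *ᵥ c = (C σ * (K σ)⁻¹)ᵀ *ᵥ ldir) :
    ldir ⬝ᵥ
        ((C' σ * (K σ)⁻¹ * B σ
            - C σ * (K σ)⁻¹ * K' σ * (K σ)⁻¹ * B σ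
            + C σ * (K σ)⁻¹ * B' σ) *ᵥ rdir)
      = ldir ⬝ᵥ
        (((C' σ * V) * (Wᵀ * K σ * V)⁻¹ * (Wᵀ * B σ)
            - (C σ * V) * (Wᵀ * K σ * V)⁻¹ * (Wᵀ * K' σ * V) *
                (Wᵀ * K σ * V)⁻¹ * (Wᵀ * B σ)
            + (C σ * V) * (Wᵀ * K σ * V)⁻¹ * (Wᵀ * B' σ)) *ᵥ rdir) := by
  obtain ⟨c, hc⟩ := hranV
  obtain ⟨d, hd⟩ := hranW
  have hK1 : K σ * (K σ)⁻¹ = 1 := Matrix.mul_nonsing_inv _ hK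
  have hK2 : (K σ)⁻¹ * K σ = 1 := Matrix.nonsing_inv_mul _ hK
  have hKr1 : (Wᵀ * K σ * V)⁻¹ * (Wᵀ * K σ * V) = 1 := Matrix.nonsing_inv_mul _ hKr
  have key1 : (Wᵀ * K σ * V) *ᵥ c = (Wᵀ * B σ) *ᵥ rdir := by
    rw [← Matrix.mulVec_mulVec c (Wᵀ * K σ) V, ← Matrix.mulVec_mulVec _ Wᵀ (K σ), hc,
      Matrix.mulVec_mulVec (B σ *ᵥ rdir) (K σ) (K σ)⁻¹, hK1, Matrix.one_mulVec,
      ← Matrix.mulVec_mulVec rdir Wᵀ (B σ)]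
  have hc2 : (Wᵀ * K σ * V)⁻¹ *ᵥ ((Wᵀ * B σ) *ᵥ rdir) = c := by
    rw [← key1, Matrix.mulVec_mulVec, hKr1, Matrix.one_mulVec]
  have hdl : ldir ᵥ* (C σ * (K σ)⁻¹) = d ᵥ* Wᵀ := by
    rw [Matrix.vecMul_transpose, hd, ← Matrix.vecMul_transpose, Matrix.transpose_transpose]
  have key2 : d ᵥ* (Wᵀ * K σ * V) = ldir ᵥ* (C σ * V) := by
    rw [← Matrix.vecMul_vecMul d (Wᵀ * K σ) V, ← Matrix.vecMul_vecMul d Wᵀ (K σ), ← hdl,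
      Matrix.vecMul_vecMul, Matrix.vecMul_vecMul, ← Matrix.mul_assoc,
      Matrix.mul_assoc (C σ) (K σ)⁻¹ (K σ),
      hK2, Matrix.mul_one]
  have hd2 : ldir ᵥ* (C σ * V * (Wᵀ * K σ * V)⁻¹) = d := by
    rw [← Matrix.vecMul_vecMul, ← key2, Matrix.vecMul_vecMul,
      Matrix.mul_nonsing_inv _ hKr, Matrix.vecMul_one]
  have t1l : ldir ⬝ᵥ (C' σ * (K σ)⁻¹ * B σ) *ᵥ rdir = ldir ⬝ᵥ (C' σ * V) *ᵥ c := by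
    rw [← Matrix.mulVec_mulVec rdir (C' σ * (K σ)⁻¹) (B σ),
      ← Matrix.mulVec_mulVec _ (C' σ) (K σ)⁻¹, ← hc, Matrix.mulVec_mulVec]
  have t1r : ldir ⬝ᵥ (C' σ * V * (Wᵀ * K σ * V)⁻¹ * (Wᵀ * B σ)) *ᵥ rdir
      = ldir ⬝ᵥ (C' σ * V) *ᵥ c := by
    rw [← Matrix.mulVec_mulVec rdir _ (Wᵀ * B σ),
      ← Matrix.mulVec_mulVec _ (C' σ * V) (Wᵀ * K σ * V)⁻¹, hc2]
  have t2l : ldir ⬝ᵥ (C σ * (K σ)⁻¹ * K' σ * (K σ)⁻¹ * B σ) *ᵥ rdir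
      = d ⬝ᵥ (Wᵀ * K' σ * V) *ᵥ c := by
    rw [← Matrix.mulVec_mulVec rdir _ (B σ), ← Matrix.mulVec_mulVec _ _ (K σ)⁻¹, ← hc,
      ← Matrix.mulVec_mulVec _ (C σ * (K σ)⁻¹) (K' σ), Matrix.dotProduct_mulVec, hdl,
      ← Matrix.dotProduct_mulVec, Matrix.mulVec_mulVec, Matrix.mulVec_mulVec]
  have t2r : ldir ⬝ᵥ (C σ * V * (Wᵀ * K σ * V)⁻¹ * (Wᵀ * K' σ * V) *
        (Wᵀ * K σ * V)⁻¹ * (Wᵀ * B σ)) *ᵥ rdir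
      = d ⬝ᵥ (Wᵀ * K' σ * V) *ᵥ c := by
    rw [← Matrix.mulVec_mulVec rdir _ (Wᵀ * B σ),
      ← Matrix.mulVec_mulVec _ _ (Wᵀ * K σ * V)⁻¹, hc2,
      ← Matrix.mulVec_mulVec _ (C σ * V * (Wᵀ * K σ * V)⁻¹) (Wᵀ * K' σ * V),
      Matrix.dotProduct_mulVec, hd2]
  have t3l : ldir ⬝ᵥ (C σ * (K σ)⁻¹ * B' σ) *ᵥ rdir = d ⬝ᵥ (Wᵀ * B' σ) *ᵥ rdir := by
    rw [← Matrix.mulVec_mulVec rdir (C σ * (K σ)⁻¹) (B' σ), Matrix.dotProduct_mulVec, hdl,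
      ← Matrix.dotProduct_mulVec, Matrix.mulVec_mulVec]
  have t3r : ldir ⬝ᵥ (C σ * V * (Wᵀ * K σ * V)⁻¹ * (Wᵀ * B' σ)) *ᵥ rdir
      = d ⬝ᵥ (Wᵀ * B' σ) *ᵥ rdir := by
    rw [← Matrix.mulVec_mulVec rdir _ (Wᵀ * B' σ), Matrix.dotProduct_mulVec, hd2]
  rw [Matrix.add_mulVec, Matrix.sub_mulVec, dotProduct_add, dotProduct_sub,
    Matrix.add_mulVec, Matrix.sub_mulVec, dotProduct_add, dotProduct_sub,
    t1l, t1r, t2l, t2r, t3l, t3r]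
end

section
/- Let H(s, p) = C(s,p)K(s,p)⁻¹B(s,p) be a parametrized transfer function where K(s,p) ∈ ℂⁿˣⁿ, B(s,p) ∈ ℂⁿˣᵐ, C(s,p) ∈ ℂᵖˣⁿ depend on s ∈ ℂ and a parameter vector p ∈ ℝᵛ. Let V, W ∈ ℂⁿˣʳ and H_r(s,p) = (C(s,p)V)(WᵀK(s,p)V)⁻¹(WᵀB(s,p)). Fix σ ∈ ℂ, π ∈ ℝᵛ with K(σ,π) and WᵀK(σ,π)V invertible, and nonzero r ∈ ℂᵐ, ℓ ∈ ℂᵖ. If K(σ,π)⁻¹B(σ,π)r ∈ Ran(V) and (ℓᵀC(σ,π)K(σ,π)⁻¹)ᵀ ∈ Ran(W), then the gradients with respect to p match: ∇_p [ℓᵀH(σ,p)r]|_{p=π} = ∇_p [ℓᵀH_r(σ,p)r]|_{p=π}. -/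
/-!
Write `E = K⁻¹ - V (WᵀKV)⁻¹ Wᵀ` for the error of the reduced model's approximation of `K⁻¹`.
Since `V (WᵀKV)⁻¹ Wᵀ K V (WᵀKV)⁻¹ Wᵀ = V (WᵀKV)⁻¹ Wᵀ`, one gets `E K E = E`, hence
`ℓᵀH r - ℓᵀH_r r = (ℓᵀC E) K (E B r)` wherever `K` and `WᵀKV` are invertible, in particular
near `π`. The range conditions say exactly that `ℓᵀC E` and `E B r` vanish at `π`, and a product
of two differentiable factors that both vanish at a point has derivative zero there.
-/

open Matrix
-- `DifferentiableAt` for matrix-valued maps only sees the product topology; the elementwise norm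
-- is opened so that the normed-space calculus lemmas (`sub`, `smul`) apply to such maps.
open scoped Matrix Matrix.Norms.Elementwise

section Differentiability

variable {𝕜 : Type*} [NontriviallyNormedField 𝕜] {𝔸 : Type*} [NormedField 𝔸] [NormedAlgebra 𝕜 𝔸]
  {ι κ μ : Type*} {x : 𝕜}

theorem differentiableAt_matrix_iff [Fintype κ] {M : 𝕜 → Matrix ι κ 𝔸} :
    DifferentiableAt 𝕜 M x ↔ ∀ i j, DifferentiableAt 𝕜 (fun t => M t i j) x :=
  differentiableAt_pi.trans (forall_congr' fun _ => differentiableAt_pi)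

theorem DifferentiableAt.matrix_mul [Fintype κ] [Fintype μ] {M : 𝕜 → Matrix ι κ 𝔸}
    {N : 𝕜 → Matrix κ μ 𝔸} (hM : DifferentiableAt 𝕜 M x) (hN : DifferentiableAt 𝕜 N x) :
    DifferentiableAt 𝕜 (fun t => M t * N t) x := by
  rw [differentiableAt_matrix_iff] at *
  intro i j
  simp only [Matrix.mul_apply]
  exact DifferentiableAt.fun_sum fun k _ => (hM i k).mul (hN k j)

theorem DifferentiableAt.matrix_mulVec [Fintype κ] {M : 𝕜 → Matrix ι κ 𝔸} {v : 𝕜 → κ → 𝔸}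
    (hM : DifferentiableAt 𝕜 M x) (hv : DifferentiableAt 𝕜 v x) :
    DifferentiableAt 𝕜 (fun t => M t *ᵥ v t) x := by
  rw [differentiableAt_matrix_iff] at hM
  rw [differentiableAt_pi] at *
  intro i
  simp only [Matrix.mulVec, dotProduct]
  exact DifferentiableAt.fun_sum fun k _ => (hM i k).mul (hv k)

theorem DifferentiableAt.matrix_vecMul [Fintype ι] [Fintype κ] {v : 𝕜 → ι → 𝔸}
    {M : 𝕜 → Matrix ι κ 𝔸} (hv : DifferentiableAt 𝕜 v x) (hM : DifferentiableAt 𝕜 M x) :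
    DifferentiableAt 𝕜 (fun t => v t ᵥ* M t) x := by
  rw [differentiableAt_matrix_iff] at hM
  rw [differentiableAt_pi] at *
  intro j
  simp only [Matrix.vecMul, dotProduct]
  exact DifferentiableAt.fun_sum fun k _ => (hv k).mul (hM k j)

theorem DifferentiableAt.matrix_updateRow [Fintype κ] [DecidableEq ι] {M : 𝕜 → Matrix ι κ 𝔸}
    {v : 𝕜 → κ → 𝔸} (hM : DifferentiableAt 𝕜 M x) (hv : DifferentiableAt 𝕜 v x) (i : ι) :
    DifferentiableAt 𝕜 (fun t => (M t).updateRow i (v t)) x := by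
  rw [differentiableAt_matrix_iff] at *
  rw [differentiableAt_pi] at hv
  intro a b
  by_cases h : a = i
  · subst h
    simpa using hv b
  · simpa [Matrix.updateRow_ne h] using hM a b

theorem DifferentiableAt.matrix_det [Fintype ι] [DecidableEq ι] {M : 𝕜 → Matrix ι ι 𝔸}
    (hM : DifferentiableAt 𝕜 M x) : DifferentiableAt 𝕜 (fun t => (M t).det) x := by
  rw [differentiableAt_matrix_iff] at hM
  simp only [Matrix.det_apply, Units.smul_def, zsmul_eq_mul]
  exact DifferentiableAt.fun_sum fun σ _ =>
    (differentiableAt_const _).mul (DifferentiableAt.fun_finsetProd fun j _ => hM _ _)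

theorem DifferentiableAt.matrix_adjugate [Fintype ι] [DecidableEq ι] {M : 𝕜 → Matrix ι ι 𝔸}
    (hM : DifferentiableAt 𝕜 M x) : DifferentiableAt 𝕜 (fun t => (M t).adjugate) x := by
  rw [differentiableAt_matrix_iff]
  intro i j
  simp only [Matrix.adjugate_apply]
  exact (hM.matrix_updateRow (differentiableAt_const _) j).matrix_det

theorem DifferentiableAt.matrix_inv [Fintype ι] [DecidableEq ι] {M : 𝕜 → Matrix ι ι 𝔸}
    (hM : DifferentiableAt 𝕜 M x) (hdet : (M x).det ≠ 0) :
    DifferentiableAt 𝕜 (fun t => (M t)⁻¹) x := by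
  simp only [Matrix.inv_def, Ring.inverse_eq_inv']
  exact (hM.matrix_det.inv hdet).smul hM.matrix_adjugate

theorem hasDerivAt_dotProduct_of_eq_zero [Fintype ι] {u w : 𝕜 → ι → 𝔸}
    (hu : DifferentiableAt 𝕜 u x) (hw : DifferentiableAt 𝕜 w x) (hu₀ : u x = 0) (hw₀ : w x = 0) :
    HasDerivAt (fun t => u t ⬝ᵥ w t) 0 x := by
  rw [differentiableAt_pi] at hu hw
  have hsum := HasDerivAt.fun_sum (u := Finset.univ) fun i _ =>
    (hu i).hasDerivAt.mul (hw i).hasDerivAt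
  simp only [hu₀, hw₀, Pi.zero_apply, mul_zero, zero_mul, add_zero, Finset.sum_const_zero] at hsum
  exact hsum

theorem deriv_eq_of_eventuallyEq_add {F : Type*} [NormedAddCommGroup F] [NormedSpace 𝕜 F]
    {f g h : 𝕜 → F} (hfgh : f =ᶠ[nhds x] fun t => g t + h t) (hh : HasDerivAt h 0 x) :
    deriv f x = deriv g x := by
  rw [hfgh.deriv_eq]
  by_cases hg : DifferentiableAt 𝕜 g x
  · rw [deriv_fun_add hg hh.differentiableAt, hh.deriv, add_zero]
  · rw [deriv_zero_of_not_differentiableAt hg, deriv_zero_of_not_differentiableAt]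
    exact fun hgh => hg (by simpa using hgh.fun_sub hh.differentiableAt)

end Differentiability

section PetrovGalerkin

variable {R : Type*} [CommRing R] {ι κ : Type*} [Fintype ι] [Fintype κ] [DecidableEq κ]

/-- `C * petrovGalerkinInv K V W * B` is the reduced transfer function `(CV) (WᵀKV)⁻¹ (WᵀB)`. -/
noncomputable def petrovGalerkinInv (K : Matrix ι ι R) (V W : Matrix ι κ R) : Matrix ι ι R :=
  V * (Wᵀ * K * V)⁻¹ * Wᵀ

variable {K : Matrix ι ι R} {V W : Matrix ι κ R}

theorem petrovGalerkinInv_mul_mul_self (hKr : IsUnit (Wᵀ * K * V).det) :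
    petrovGalerkinInv K V W * K * petrovGalerkinInv K V W = petrovGalerkinInv K V W := by
  calc petrovGalerkinInv K V W * K * petrovGalerkinInv K V W
      = V * ((Wᵀ * K * V)⁻¹ * (Wᵀ * K * V)) * (Wᵀ * K * V)⁻¹ * Wᵀ := by
        simp only [petrovGalerkinInv, Matrix.mul_assoc]
    _ = petrovGalerkinInv K V W := by rw [nonsing_inv_mul _ hKr, Matrix.mul_one]; rfl

theorem inv_sub_petrovGalerkinInv_mul_mul_self [DecidableEq ι] (hK : IsUnit K.det)
    (hKr : IsUnit (Wᵀ * K * V).det) :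
    (K⁻¹ - petrovGalerkinInv K V W) * K * (K⁻¹ - petrovGalerkinInv K V W) =
      K⁻¹ - petrovGalerkinInv K V W := by
  have hP : petrovGalerkinInv K V W * K * K⁻¹ = petrovGalerkinInv K V W := by
    rw [Matrix.mul_assoc, mul_nonsing_inv _ hK, Matrix.mul_one]
  rw [Matrix.sub_mul, Matrix.mul_sub, Matrix.sub_mul, Matrix.sub_mul, nonsing_inv_mul _ hK,
    Matrix.one_mul, Matrix.one_mul, hP, petrovGalerkinInv_mul_mul_self hKr]
  abel

theorem inv_sub_petrovGalerkinInv_mul_mul_eq_zero [DecidableEq ι] (hK : IsUnit K.det)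
    (hKr : IsUnit (Wᵀ * K * V).det) :
    (K⁻¹ - petrovGalerkinInv K V W) * K * V = 0 := by
  have hP : petrovGalerkinInv K V W * K * V = V * ((Wᵀ * K * V)⁻¹ * (Wᵀ * K * V)) := by
    simp only [petrovGalerkinInv, Matrix.mul_assoc]
  rw [Matrix.sub_mul, Matrix.sub_mul, nonsing_inv_mul _ hK, Matrix.one_mul, hP,
    nonsing_inv_mul _ hKr, Matrix.mul_one, sub_self]

theorem transpose_mul_mul_inv_sub_petrovGalerkinInv_eq_zero [DecidableEq ι] (hK : IsUnit K.det)
    (hKr : IsUnit (Wᵀ * K * V).det) :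
    Wᵀ * K * (K⁻¹ - petrovGalerkinInv K V W) = 0 := by
  have hP : Wᵀ * K * petrovGalerkinInv K V W = (Wᵀ * K * V) * (Wᵀ * K * V)⁻¹ * Wᵀ := by
    simp only [petrovGalerkinInv, Matrix.mul_assoc]
  rw [Matrix.mul_sub, Matrix.mul_assoc, mul_nonsing_inv _ hK, Matrix.mul_one, hP,
    mul_nonsing_inv _ hKr, Matrix.one_mul, sub_self]

theorem inv_sub_petrovGalerkinInv_mulVec_eq_zero [DecidableEq ι] (hK : IsUnit K.det)
    (hKr : IsUnit (Wᵀ * K * V).det) {b : ι → R} {c : κ → R} (hc : V *ᵥ c = K⁻¹ *ᵥ b) :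
    (K⁻¹ - petrovGalerkinInv K V W) *ᵥ b = 0 := by
  have hb : b = K *ᵥ V *ᵥ c := by rw [hc, mulVec_mulVec, mul_nonsing_inv _ hK, one_mulVec]
  rw [hb, mulVec_mulVec, mulVec_mulVec, inv_sub_petrovGalerkinInv_mul_mul_eq_zero hK hKr,
    zero_mulVec]

theorem vecMul_inv_sub_petrovGalerkinInv_eq_zero [DecidableEq ι] (hK : IsUnit K.det)
    (hKr : IsUnit (Wᵀ * K * V).det) {a : ι → R} {d : κ → R} (hd : W *ᵥ d = (K⁻¹)ᵀ *ᵥ a) :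
    a ᵥ* (K⁻¹ - petrovGalerkinInv K V W) = 0 := by
  rw [← vecMul_transpose, mulVec_transpose] at hd
  have ha : a = d ᵥ* Wᵀ ᵥ* K := by rw [hd, vecMul_vecMul, nonsing_inv_mul _ hK, vecMul_one]
  rw [ha, vecMul_vecMul, vecMul_vecMul, ← Matrix.mul_assoc,
    transpose_mul_mul_inv_sub_petrovGalerkinInv_eq_zero hK hKr, vecMul_zero]

theorem dotProduct_mul_inv_mul_mulVec_eq_add [DecidableEq ι] (hK : IsUnit K.det)
    (hKr : IsUnit (Wᵀ * K * V).det) {μ ν : Type*} [Fintype μ] [Fintype ν] (C : Matrix μ ι R)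
    (B : Matrix ι ν R) (l : μ → R) (r : ν → R) :
    l ⬝ᵥ ((C * K⁻¹ * B) *ᵥ r) =
      l ⬝ᵥ ((C * V * (Wᵀ * K * V)⁻¹ * (Wᵀ * B)) *ᵥ r) +
        (l ᵥ* C ᵥ* (K⁻¹ - petrovGalerkinInv K V W)) ⬝ᵥ
          (K *ᵥ (K⁻¹ - petrovGalerkinInv K V W) *ᵥ B *ᵥ r) := by
  set E := K⁻¹ - petrovGalerkinInv K V W
  rw [← dotProduct_mulVec, ← dotProduct_mulVec, mulVec_mulVec, mulVec_mulVec, mulVec_mulVec,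
    mulVec_mulVec, ← dotProduct_add, ← add_mulVec]
  congr 2
  rw [show C * E * K * E * B = C * (E * K * E) * B by simp only [Matrix.mul_assoc],
    inv_sub_petrovGalerkinInv_mul_mul_self hK hKr]
  simp only [petrovGalerkinInv, Matrix.mul_sub, Matrix.sub_mul, Matrix.mul_assoc]
  abel

end PetrovGalerkin

section Sensitivity

variable {𝕜 : Type*} [NontriviallyNormedField 𝕜] {𝔸 : Type*} [NormedField 𝔸] [NormedAlgebra 𝕜 𝔸]
  {ι κ μ ν : Type*} [Fintype ι] [Fintype κ] [Fintype μ] [Fintype ν] [DecidableEq κ] {x : 𝕜}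

theorem DifferentiableAt.petrovGalerkinInv {K : 𝕜 → Matrix ι ι 𝔸} (V W : Matrix ι κ 𝔸)
    (hK : DifferentiableAt 𝕜 K x) (hKr : (Wᵀ * K x * V).det ≠ 0) :
    DifferentiableAt 𝕜 (fun t => petrovGalerkinInv (K t) V W) x := by
  have hWKV := ((differentiableAt_const Wᵀ).matrix_mul hK).matrix_mul (differentiableAt_const V)
  exact ((differentiableAt_const V).matrix_mul (hWKV.matrix_inv hKr)).matrix_mul
    (differentiableAt_const Wᵀ)

theorem deriv_dotProduct_transfer_eq_reduced [DecidableEq ι] {K : 𝕜 → Matrix ι ι 𝔸}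
    {B : 𝕜 → Matrix ι ν 𝔸} {C : 𝕜 → Matrix μ ι 𝔸} (V W : Matrix ι κ 𝔸)
    (hK : DifferentiableAt 𝕜 K x) (hB : DifferentiableAt 𝕜 B x) (hC : DifferentiableAt 𝕜 C x)
    (hKx : IsUnit (K x).det) (hKrx : IsUnit (Wᵀ * K x * V).det) {l : μ → 𝔸} {r : ν → 𝔸}
    (hV : ∃ c, V *ᵥ c = (K x)⁻¹ *ᵥ (B x *ᵥ r))
    (hW : ∃ d, W *ᵥ d = (C x * (K x)⁻¹)ᵀ *ᵥ l) :
    deriv (fun t => l ⬝ᵥ ((C t * (K t)⁻¹ * B t) *ᵥ r)) x =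
      deriv (fun t => l ⬝ᵥ ((C t * V * (Wᵀ * K t * V)⁻¹ * (Wᵀ * B t)) *ᵥ r)) x := by
  obtain ⟨c, hc⟩ := hV
  obtain ⟨d, hd⟩ := hW
  rw [transpose_mul, ← mulVec_mulVec, mulVec_transpose (C x)] at hd
  have hE : DifferentiableAt 𝕜 (fun t => (K t)⁻¹ - petrovGalerkinInv (K t) V W) x :=
    (hK.matrix_inv hKx.ne_zero).sub (hK.petrovGalerkinInv V W hKrx.ne_zero)
  have hKr : DifferentiableAt 𝕜 (fun t => Wᵀ * K t * V) x :=
    ((differentiableAt_const _).matrix_mul hK).matrix_mul (differentiableAt_const _)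
  refine deriv_eq_of_eventuallyEq_add ?_ <| hasDerivAt_dotProduct_of_eq_zero
    (((differentiableAt_const l).matrix_vecMul hC).matrix_vecMul hE)
    (hK.matrix_mulVec (hE.matrix_mulVec (hB.matrix_mulVec (differentiableAt_const r))))
    (vecMul_inv_sub_petrovGalerkinInv_eq_zero hKx hKrx hd)
    (by rw [inv_sub_petrovGalerkinInv_mulVec_eq_zero hKx hKrx hc, mulVec_zero])
  filter_upwards [hK.matrix_det.continuousAt.eventually_ne hKx.ne_zero,
    hKr.matrix_det.continuousAt.eventually_ne hKrx.ne_zero] with t hKt hKrt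
  exact dotProduct_mul_inv_mul_mulVec_eq_add hKt.isUnit hKrt.isUnit _ _ _ _

end Sensitivity

theorem parametric_sensitivity_matching_general
    {n m p r v : ℕ}
    (K : ℂ → (Fin v → ℝ) → Matrix (Fin n) (Fin n) ℂ)
    (B : ℂ → (Fin v → ℝ) → Matrix (Fin n) (Fin m) ℂ)
    (C : ℂ → (Fin v → ℝ) → Matrix (Fin p) (Fin n) ℂ)
    (V W : Matrix (Fin n) (Fin r) ℂ)
    (σ : ℂ) (π : Fin v → ℝ)
    (hKdiff : ∀ (i : Fin v) (a b : Fin n),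
      DifferentiableAt ℝ (fun t : ℝ => K σ (Function.update π i t) a b) (π i))
    (hBdiff : ∀ (i : Fin v) (a : Fin n) (b : Fin m),
      DifferentiableAt ℝ (fun t : ℝ => B σ (Function.update π i t) a b) (π i))
    (hCdiff : ∀ (i : Fin v) (a : Fin p) (b : Fin n),
      DifferentiableAt ℝ (fun t : ℝ => C σ (Function.update π i t) a b) (π i))
    (hK : IsUnit (K σ π).det)
    (hKr : IsUnit (Wᵀ * K σ π * V).det)
    (rdir : Fin m → ℂ)
    (ldir : Fin p → ℂ)
    (hranV : ∃ c : Fin r → ℂ, V *ᵥ c = (K σ π)⁻¹ *ᵥ (B σ π *ᵥ rdir))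
    (hranW : ∃ c : Fin r → ℂ, W *ᵥ c = (C σ π * (K σ π)⁻¹)ᵀ *ᵥ ldir) :
    ∀ i : Fin v,
      deriv (fun t : ℝ =>
          ldir ⬝ᵥ ((C σ (Function.update π i t) * (K σ (Function.update π i t))⁻¹ *
              B σ (Function.update π i t)) *ᵥ rdir)) (π i)
        = deriv (fun t : ℝ =>
            ldir ⬝ᵥ (((C σ (Function.update π i t) * V) *
                (Wᵀ * K σ (Function.update π i t) * V)⁻¹ *
                (Wᵀ * B σ (Function.update π i t))) *ᵥ rdir)) (π i) := by
  intro i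
  have hπ : Function.update π i (π i) = π := Function.update_eq_self i π
  exact deriv_dotProduct_transfer_eq_reduced V W (differentiableAt_matrix_iff.2 (hKdiff i))
    (differentiableAt_matrix_iff.2 (hBdiff i)) (differentiableAt_matrix_iff.2 (hCdiff i))
    (by rwa [hπ]) (by rwa [hπ]) (by rwa [hπ]) (by rwa [hπ])

/-- Parameter sensitivity matching for interpolatory parametric model reduction:
for `H(s,p) = C(s,p) K(s,p)⁻¹ B(s,p)` and the projected reduced model
`H_r(s,p) = C(s,p)V (WᵀK(s,p)V)⁻¹ WᵀB(s,p)`, if the tangential conditions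
`K(σ,π)⁻¹B(σ,π)r ∈ Ran(V)` and `(ℓᵀC(σ,π)K(σ,π)⁻¹)ᵀ ∈ Ran(W)` hold, then all
first-order parameter sensitivities of `ℓᵀH(σ,·)r` and `ℓᵀH_r(σ,·)r` agree at `π`. -/
theorem parametric_sensitivity_matching
    {n m p r v : ℕ}
    (K : ℂ → (Fin v → ℝ) → Matrix (Fin n) (Fin n) ℂ)
    (B : ℂ → (Fin v → ℝ) → Matrix (Fin n) (Fin m) ℂ)
    (C : ℂ → (Fin v → ℝ) → Matrix (Fin p) (Fin n) ℂ)
    (V W : Matrix (Fin n) (Fin r) ℂ)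
    (σ : ℂ) (π : Fin v → ℝ)
    (hKdiff : ∀ (i : Fin v) (a b : Fin n),
      DifferentiableAt ℝ (fun t : ℝ => K σ (Function.update π i t) a b) (π i))
    (hBdiff : ∀ (i : Fin v) (a : Fin n) (b : Fin m),
      DifferentiableAt ℝ (fun t : ℝ => B σ (Function.update π i t) a b) (π i))
    (hCdiff : ∀ (i : Fin v) (a : Fin p) (b : Fin n),
      DifferentiableAt ℝ (fun t : ℝ => C σ (Function.update π i t) a b) (π i))
    (hK : IsUnit (K σ π).det)
    (hKr : IsUnit (Wᵀ * K σ π * V).det)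
    (rdir : Fin m → ℂ) (hrdir : rdir ≠ 0)
    (ldir : Fin p → ℂ) (hldir : ldir ≠ 0)
    (hranV : ∃ c : Fin r → ℂ, V *ᵥ c = (K σ π)⁻¹ *ᵥ (B σ π *ᵥ rdir))
    (hranW : ∃ c : Fin r → ℂ, W *ᵥ c = (C σ π * (K σ π)⁻¹)ᵀ *ᵥ ldir) :
    ∀ i : Fin v,
      deriv (fun t : ℝ =>
          ldir ⬝ᵥ ((C σ (Function.update π i t) * (K σ (Function.update π i t))⁻¹ *
              B σ (Function.update π i t)) *ᵥ rdir)) (π i)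
        = deriv (fun t : ℝ =>
            ldir ⬝ᵥ (((C σ (Function.update π i t) * V) *
                (Wᵀ * K σ (Function.update π i t) * V)⁻¹ *
                (Wᵀ * B σ (Function.update π i t))) *ᵥ rdir)) (π i) :=
  parametric_sensitivity_matching_general K B C V W σ π hKdiff hBdiff hCdiff hK hKr rdir ldir hranV
    hranW
end

section
/- Let K(s,p), B(s,p), C(s,p) be as in the parametric interpolation setting, with the tangential conditions K(σ,π)⁻¹B(σ,π)r ∈ Ran(V) and (ℓᵀC(σ,π)K(σ,π)⁻¹)ᵀ ∈ Ran(W). Then the value and s-derivative both match: ℓᵀH(σ,π)r = ℓᵀH_r(σ,π)r and ℓᵀ∂_sH(σ,π)r = ℓᵀ∂_sH_r(σ,π)r, where H(s,p) = C(s,p)K(s,p)⁻¹B(s,p) and H_r(s,p) = C(s,p)V(WᵀK(s,p)V)⁻¹WᵀB(s,p). -/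
open Matrix
open scoped Matrix

/-!
Write `E = K⁻¹ - V (Wᵀ K V)⁻¹ Wᵀ`. Then `H - H_r = C E B`, and `E K V = 0`, `Wᵀ K E = 0` give
`E K E = E`, so `ℓᵀ (H - H_r) r = (ℓᵀ C E) · K · (E B r)`. The tangential conditions say exactly
that the row `ℓᵀ C E` and the column `E B r` vanish at `σ`; a bilinear expression in two
functions vanishing at `σ` vanishes there to second order, so value and derivative both match.
-/

section EntrywiseDifferentiability

variable {𝕜 : Type*} [NontriviallyNormedField 𝕜] {x : 𝕜} {ι κ μ : Type*} [Fintype ι]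

theorem DifferentiableAt.hasDerivAt_mul_of_eq_zero {f g : 𝕜 → 𝕜} (hf : DifferentiableAt 𝕜 f x)
    (hg : DifferentiableAt 𝕜 g x) (hf0 : f x = 0) (hg0 : g x = 0) :
    HasDerivAt (fun s => f s * g s) 0 x := by
  simpa [hf0, hg0] using hf.hasDerivAt.fun_mul hg.hasDerivAt

theorem differentiableAt_dotProduct {v w : 𝕜 → ι → 𝕜}
    (hv : ∀ i, DifferentiableAt 𝕜 (fun s => v s i) x)
    (hw : ∀ i, DifferentiableAt 𝕜 (fun s => w s i) x) :
    DifferentiableAt 𝕜 (fun s => v s ⬝ᵥ w s) x :=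
  DifferentiableAt.fun_sum fun i _ => (hv i).mul (hw i)

theorem differentiableAt_mulVec_apply {A : 𝕜 → Matrix κ ι 𝕜} {v : 𝕜 → ι → 𝕜}
    (hA : ∀ i j, DifferentiableAt 𝕜 (fun s => A s i j) x)
    (hv : ∀ j, DifferentiableAt 𝕜 (fun s => v s j) x) (i : κ) :
    DifferentiableAt 𝕜 (fun s => (A s *ᵥ v s) i) x :=
  differentiableAt_dotProduct (hA i) hv

theorem differentiableAt_vecMul_apply {A : 𝕜 → Matrix ι κ 𝕜} {v : 𝕜 → ι → 𝕜}
    (hv : ∀ i, DifferentiableAt 𝕜 (fun s => v s i) x)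
    (hA : ∀ i j, DifferentiableAt 𝕜 (fun s => A s i j) x) (j : κ) :
    DifferentiableAt 𝕜 (fun s => (v s ᵥ* A s) j) x :=
  differentiableAt_dotProduct hv fun i => hA i j

theorem differentiableAt_mul_apply {A : 𝕜 → Matrix κ ι 𝕜} {B : 𝕜 → Matrix ι μ 𝕜}
    (hA : ∀ i j, DifferentiableAt 𝕜 (fun s => A s i j) x)
    (hB : ∀ i j, DifferentiableAt 𝕜 (fun s => B s i j) x) (i : κ) (j : μ) :
    DifferentiableAt 𝕜 (fun s => (A s * B s) i j) x :=
  differentiableAt_dotProduct (hA i) fun k => hB k j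

theorem differentiableAt_const_mul_mul_const_apply [Fintype κ] (W : Matrix κ ι 𝕜)
    {A : 𝕜 → Matrix ι ι 𝕜} (V : Matrix ι κ 𝕜)
    (hA : ∀ i j, DifferentiableAt 𝕜 (fun s => A s i j) x) (i j : κ) :
    DifferentiableAt 𝕜 (fun s => (W * A s * V) i j) x :=
  differentiableAt_mul_apply (B := fun _ => V)
    (differentiableAt_mul_apply (A := fun _ => W) (fun _ _ => differentiableAt_const _) hA)
    (fun _ _ => differentiableAt_const _) i j

theorem hasDerivAt_dotProduct_mulVec_of_eq_zero [Fintype κ] {w : 𝕜 → ι → 𝕜}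
    {A : 𝕜 → Matrix ι κ 𝕜} {u : 𝕜 → κ → 𝕜} (hw : ∀ i, DifferentiableAt 𝕜 (fun s => w s i) x)
    (hA : ∀ i j, DifferentiableAt 𝕜 (fun s => A s i j) x)
    (hu : ∀ j, DifferentiableAt 𝕜 (fun s => u s j) x) (hw0 : w x = 0) (hu0 : u x = 0) :
    HasDerivAt (fun s => w s ⬝ᵥ (A s *ᵥ u s)) 0 x := by
  have hterm (i : ι) : HasDerivAt (fun s => w s i * (A s *ᵥ u s) i) 0 x :=
    (hw i).hasDerivAt_mul_of_eq_zero (differentiableAt_mulVec_apply hA hu i)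
      (congrFun hw0 i) (by rw [hu0, mulVec_zero, Pi.zero_apply])
  show HasDerivAt (fun s => ∑ i, w s i * (A s *ᵥ u s) i) 0 x
  simpa only [Finset.sum_const_zero] using
    HasDerivAt.fun_sum fun i (_ : i ∈ Finset.univ) => hterm i

variable [DecidableEq ι]

theorem differentiableAt_det {A : 𝕜 → Matrix ι ι 𝕜}
    (hA : ∀ i j, DifferentiableAt 𝕜 (fun s => A s i j) x) :
    DifferentiableAt 𝕜 (fun s => (A s).det) x := by
  simp only [det_apply']
  exact DifferentiableAt.fun_sum fun τ _ =>
    (DifferentiableAt.fun_finsetProd fun i _ => hA (τ i) i).const_mul _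

theorem differentiableAt_adjugate_apply {A : 𝕜 → Matrix ι ι 𝕜}
    (hA : ∀ i j, DifferentiableAt 𝕜 (fun s => A s i j) x) (i j : ι) :
    DifferentiableAt 𝕜 (fun s => (A s).adjugate i j) x := by
  simp only [adjugate_apply]
  refine differentiableAt_det fun a b => ?_
  by_cases h : a = j
  · simp only [h, updateRow_self, differentiableAt_const]
  · simpa only [updateRow_ne h] using hA a b

theorem differentiableAt_inv_apply {A : 𝕜 → Matrix ι ι 𝕜}
    (hA : ∀ i j, DifferentiableAt 𝕜 (fun s => A s i j) x) (hdet : IsUnit (A x).det) (i j : ι) :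
    DifferentiableAt 𝕜 (fun s => (A s)⁻¹ i j) x := by
  simp only [inv_def, Ring.inverse_eq_inv', Matrix.smul_apply, smul_eq_mul]
  exact ((differentiableAt_det hA).inv hdet.ne_zero).mul
    (differentiableAt_adjugate_apply hA i j)

end EntrywiseDifferentiability

theorem deriv_fun_add_of_hasDerivAt_zero {𝕜 F : Type*} [NontriviallyNormedField 𝕜]
    [NormedAddCommGroup F] [NormedSpace 𝕜 F] {f g : 𝕜 → F} {x : 𝕜} (hg : HasDerivAt g 0 x) :
    deriv (fun s => f s + g s) x = deriv f x := by
  by_cases hf : DifferentiableAt 𝕜 f x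
  · rw [deriv_fun_add hf hg.differentiableAt, hg.deriv, add_zero]
  · rw [deriv_zero_of_not_differentiableAt hf, deriv_zero_of_not_differentiableAt]
    rwa [DifferentiableAt.fun_add_iff_left hg.differentiableAt]

namespace Matrix

section PetrovGalerkin

variable {R : Type*} [CommRing R] {ι ρ : Type*} [Fintype ι] [DecidableEq ι] [Fintype ρ]
  [DecidableEq ρ]

/-- `V (W K V)⁻¹ W` is the Petrov–Galerkin approximation of `K⁻¹`; the paper's `Wᵀ` is `W` here. -/
noncomputable def petrovGalerkinError (K : Matrix ι ι R) (V : Matrix ι ρ R) (W : Matrix ρ ι R) :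
    Matrix ι ι R :=
  K⁻¹ - V * (W * K * V)⁻¹ * W

variable {K : Matrix ι ι R} {V : Matrix ι ρ R} {W : Matrix ρ ι R}

theorem petrovGalerkinError_mul_mul_eq_zero (hK : IsUnit K.det)
    (hM : IsUnit (W * K * V).det) : petrovGalerkinError K V W * K * V = 0 := by
  have hMM := nonsing_inv_mul _ hM
  simp only [Matrix.mul_assoc] at hMM
  simp only [petrovGalerkinError, Matrix.sub_mul, nonsing_inv_mul_cancel_left _ _ hK,
    Matrix.mul_assoc, hMM, Matrix.mul_one, sub_self]

theorem mul_mul_petrovGalerkinError_eq_zero (hK : IsUnit K.det)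
    (hM : IsUnit (W * K * V).det) : W * K * petrovGalerkinError K V W = 0 := by
  rw [petrovGalerkinError, Matrix.mul_sub, Matrix.mul_assoc W, mul_nonsing_inv _ hK,
    Matrix.mul_one, ← Matrix.mul_assoc, ← Matrix.mul_assoc, mul_nonsing_inv _ hM,
    Matrix.one_mul, sub_self]

theorem petrovGalerkinError_mul_mul_self (hK : IsUnit K.det) (hM : IsUnit (W * K * V).det) :
    petrovGalerkinError K V W * K * petrovGalerkinError K V W = petrovGalerkinError K V W := by
  calc petrovGalerkinError K V W * K * petrovGalerkinError K V W
      = petrovGalerkinError K V W * K * (K⁻¹ - V * (W * K * V)⁻¹ * W) := rfl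
    _ = petrovGalerkinError K V W := by
      rw [Matrix.mul_sub, Matrix.mul_assoc _ K, mul_nonsing_inv _ hK, Matrix.mul_one,
        ← Matrix.mul_assoc, ← Matrix.mul_assoc, petrovGalerkinError_mul_mul_eq_zero hK hM,
        Matrix.zero_mul, Matrix.zero_mul, sub_zero]

theorem petrovGalerkinError_mulVec_eq_zero (hK : IsUnit K.det) (hM : IsUnit (W * K * V).det)
    {b : ι → R} {c : ρ → R} (hc : V *ᵥ c = K⁻¹ *ᵥ b) :
    petrovGalerkinError K V W *ᵥ b = 0 := by
  have hb : b = (K * V) *ᵥ c := by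
    rw [← mulVec_mulVec, hc, mulVec_mulVec, mul_nonsing_inv _ hK, one_mulVec]
  rw [hb, mulVec_mulVec, ← Matrix.mul_assoc, petrovGalerkinError_mul_mul_eq_zero hK hM,
    zero_mulVec]

theorem vecMul_petrovGalerkinError_eq_zero (hK : IsUnit K.det) (hM : IsUnit (W * K * V).det)
    {y : ι → R} {d : ρ → R} (hd : d ᵥ* W = y ᵥ* K⁻¹) :
    y ᵥ* petrovGalerkinError K V W = 0 := by
  have hy : y = d ᵥ* (W * K) := by
    rw [← vecMul_vecMul, hd, vecMul_vecMul, nonsing_inv_mul _ hK, vecMul_one]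
  rw [hy, vecMul_vecMul, mul_mul_petrovGalerkinError_eq_zero hK hM, vecMul_zero]

theorem dotProduct_mul_inv_mul_mulVec_eq_add {κ τ : Type*} [Fintype κ] [Fintype τ]
    (hK : IsUnit K.det) (hM : IsUnit (W * K * V).det) (C : Matrix κ ι R) (B : Matrix ι τ R)
    (l : κ → R) (r : τ → R) :
    l ⬝ᵥ ((C * K⁻¹ * B) *ᵥ r) = l ⬝ᵥ ((C * V * (W * K * V)⁻¹ * (W * B)) *ᵥ r)
      + (l ᵥ* C ᵥ* petrovGalerkinError K V W) ⬝ᵥ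
          (K *ᵥ (petrovGalerkinError K V W *ᵥ (B *ᵥ r))) := by
  have hsplit : C * K⁻¹ * B
      = C * V * (W * K * V)⁻¹ * (W * B)
        + C * (petrovGalerkinError K V W * K * petrovGalerkinError K V W) * B := by
    rw [petrovGalerkinError_mul_mul_self hK hM]
    simp only [petrovGalerkinError, Matrix.mul_sub, Matrix.sub_mul, Matrix.mul_assoc]
    abel
  rw [hsplit, add_mulVec, dotProduct_add]
  simp only [mulVec_mulVec, dotProduct_mulVec, vecMul_vecMul, Matrix.mul_assoc]

theorem dotProduct_mul_inv_mul_mulVec_eq_of_mulVec_eq {κ τ : Type*} [Fintype κ] [Fintype τ]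
    (hK : IsUnit K.det) (hM : IsUnit (W * K * V).det) (C : Matrix κ ι R) {B : Matrix ι τ R}
    (l : κ → R) {r : τ → R} (hV : ∃ c, V *ᵥ c = K⁻¹ *ᵥ (B *ᵥ r)) :
    l ⬝ᵥ ((C * K⁻¹ * B) *ᵥ r) = l ⬝ᵥ ((C * V * (W * K * V)⁻¹ * (W * B)) *ᵥ r) := by
  obtain ⟨c, hc⟩ := hV
  rw [dotProduct_mul_inv_mul_mulVec_eq_add hK hM, petrovGalerkinError_mulVec_eq_zero hK hM hc,
    mulVec_zero, dotProduct_zero, add_zero]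

end PetrovGalerkin

variable {𝕜 : Type*} [NontriviallyNormedField 𝕜] {ι ρ κ τ : Type*} [Fintype ι] [DecidableEq ι]
  [Fintype ρ] [DecidableEq ρ] [Fintype κ] [Fintype τ]

theorem differentiableAt_petrovGalerkinError_apply {K : 𝕜 → Matrix ι ι 𝕜} {V : Matrix ι ρ 𝕜}
    {W : Matrix ρ ι 𝕜} {x : 𝕜} (hKd : ∀ i j, DifferentiableAt 𝕜 (fun s => K s i j) x)
    (hK : IsUnit (K x).det) (hM : IsUnit (W * K x * V).det) (i j : ι) :
    DifferentiableAt 𝕜 (fun s => petrovGalerkinError (K s) V W i j) x := by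
  have hVMd : ∀ i j, DifferentiableAt 𝕜 (fun s => (V * (W * K s * V)⁻¹) i j) x :=
    differentiableAt_mul_apply (A := fun _ => V) (fun _ _ => differentiableAt_const _)
      (differentiableAt_inv_apply (differentiableAt_const_mul_mul_const_apply W V hKd) hM)
  simp only [petrovGalerkinError, sub_apply]
  exact (differentiableAt_inv_apply hKd hK i j).sub <|
    differentiableAt_mul_apply (B := fun _ => W) hVMd (fun _ _ => differentiableAt_const _) i j

theorem deriv_dotProduct_mul_inv_mul_mulVec_eq {K : 𝕜 → Matrix ι ι 𝕜} {B : 𝕜 → Matrix ι τ 𝕜}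
    {C : 𝕜 → Matrix κ ι 𝕜} {V : Matrix ι ρ 𝕜} {W : Matrix ρ ι 𝕜} {x : 𝕜}
    (hKd : ∀ i j, DifferentiableAt 𝕜 (fun s => K s i j) x)
    (hBd : ∀ i j, DifferentiableAt 𝕜 (fun s => B s i j) x)
    (hCd : ∀ i j, DifferentiableAt 𝕜 (fun s => C s i j) x)
    (hK : IsUnit (K x).det) (hM : IsUnit (W * K x * V).det) {l : κ → 𝕜} {r : τ → 𝕜}
    (hV : ∃ c, V *ᵥ c = (K x)⁻¹ *ᵥ (B x *ᵥ r)) (hW : ∃ d, d ᵥ* W = l ᵥ* (C x * (K x)⁻¹)) :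
    deriv (fun s => l ⬝ᵥ ((C s * (K s)⁻¹ * B s) *ᵥ r)) x
      = deriv (fun s => l ⬝ᵥ ((C s * V * (W * K s * V)⁻¹ * (W * B s)) *ᵥ r)) x := by
  obtain ⟨c, hc⟩ := hV
  obtain ⟨d, hd⟩ := hW
  have hMd := differentiableAt_const_mul_mul_const_apply W V hKd
  have hEd := differentiableAt_petrovGalerkinError_apply hKd hK hM
  have hw : ∀ i, DifferentiableAt 𝕜
      (fun s => (l ᵥ* C s ᵥ* petrovGalerkinError (K s) V W) i) x :=
    differentiableAt_vecMul_apply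
      (differentiableAt_vecMul_apply (fun _ => differentiableAt_const _) hCd) hEd
  have hu : ∀ i, DifferentiableAt 𝕜
      (fun s => (petrovGalerkinError (K s) V W *ᵥ (B s *ᵥ r)) i) x :=
    differentiableAt_mulVec_apply hEd
      (differentiableAt_mulVec_apply hBd fun _ => differentiableAt_const _)
  have hw0 : l ᵥ* C x ᵥ* petrovGalerkinError (K x) V W = 0 :=
    vecMul_petrovGalerkinError_eq_zero hK hM (d := d) (by rw [hd, vecMul_vecMul])
  have hq := hasDerivAt_dotProduct_mulVec_of_eq_zero hw hKd hu hw0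
    (petrovGalerkinError_mulVec_eq_zero hK hM hc)
  have hunits : ∀ᶠ s in nhds x, IsUnit (K s).det ∧ IsUnit (W * K s * V).det := by
    simp only [isUnit_iff_ne_zero]
    exact ((differentiableAt_det hKd).continuousAt.eventually_ne hK.ne_zero).and
      ((differentiableAt_det hMd).continuousAt.eventually_ne hM.ne_zero)
  conv_rhs => rw [← deriv_fun_add_of_hasDerivAt_zero hq]
  refine Filter.EventuallyEq.deriv_eq ?_
  filter_upwards [hunits] with s hs using
    dotProduct_mul_inv_mul_mulVec_eq_add hs.1 hs.2 (C s) (B s) l r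

end Matrix

theorem parametric_value_and_frequency_derivative_matching_general
    {n m p r v : ℕ}
    (K : ℂ → (Fin v → ℝ) → Matrix (Fin n) (Fin n) ℂ)
    (B : ℂ → (Fin v → ℝ) → Matrix (Fin n) (Fin m) ℂ)
    (C : ℂ → (Fin v → ℝ) → Matrix (Fin p) (Fin n) ℂ)
    (V W : Matrix (Fin n) (Fin r) ℂ)
    (σ : ℂ) (π : Fin v → ℝ)
    (hKdiff : ∀ (a b : Fin n), DifferentiableAt ℂ (fun s : ℂ => K s π a b) σ)
    (hBdiff : ∀ (a : Fin n) (b : Fin m), DifferentiableAt ℂ (fun s : ℂ => B s π a b) σ)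
    (hCdiff : ∀ (a : Fin p) (b : Fin n), DifferentiableAt ℂ (fun s : ℂ => C s π a b) σ)
    (hK : IsUnit (K σ π).det)
    (hKr : IsUnit (Wᵀ * K σ π * V).det)
    (rdir : Fin m → ℂ)
    (ldir : Fin p → ℂ)
    (hranV : ∃ c : Fin r → ℂ, V *ᵥ c = (K σ π)⁻¹ *ᵥ (B σ π *ᵥ rdir))
    (hranW : ∃ c : Fin r → ℂ, W *ᵥ c = (C σ π * (K σ π)⁻¹)ᵀ *ᵥ ldir) :
    ldir ⬝ᵥ ((C σ π * (K σ π)⁻¹ * B σ π) *ᵥ rdir)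
      = ldir ⬝ᵥ (((C σ π * V) * (Wᵀ * K σ π * V)⁻¹ * (Wᵀ * B σ π)) *ᵥ rdir) ∧
    deriv (fun s : ℂ =>
        ldir ⬝ᵥ ((C s π * (K s π)⁻¹ * B s π) *ᵥ rdir)) σ
      = deriv (fun s : ℂ =>
          ldir ⬝ᵥ (((C s π * V) * (Wᵀ * K s π * V)⁻¹ * (Wᵀ * B s π)) *ᵥ rdir)) σ := by
  have hranW_vecMul : ∃ d, d ᵥ* Wᵀ = ldir ᵥ* (C σ π * (K σ π)⁻¹) := by
    obtain ⟨d, hd⟩ := hranW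
    exact ⟨d, by rw [vecMul_transpose, hd, mulVec_transpose]⟩
  exact ⟨dotProduct_mul_inv_mul_mulVec_eq_of_mulVec_eq hK hKr _ _ hranV,
    deriv_dotProduct_mul_inv_mul_mulVec_eq hKdiff hBdiff hCdiff hK hKr hranV hranW_vecMul⟩

/-- Parametric bitangential Hermite interpolation: under the tangential subspace
conditions at `(σ, π)`, both the value and the frequency derivative of
`ℓᵀH(·,π)r` and `ℓᵀH_r(·,π)r` match at `σ`, where
`H(s,p) = C(s,p)K(s,p)⁻¹B(s,p)` and `H_r(s,p) = C(s,p)V(WᵀK(s,p)V)⁻¹WᵀB(s,p)`. -/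
theorem parametric_value_and_frequency_derivative_matching
    {n m p r v : ℕ}
    (K : ℂ → (Fin v → ℝ) → Matrix (Fin n) (Fin n) ℂ)
    (B : ℂ → (Fin v → ℝ) → Matrix (Fin n) (Fin m) ℂ)
    (C : ℂ → (Fin v → ℝ) → Matrix (Fin p) (Fin n) ℂ)
    (V W : Matrix (Fin n) (Fin r) ℂ)
    (σ : ℂ) (π : Fin v → ℝ)
    (hKdiff : ∀ (a b : Fin n), DifferentiableAt ℂ (fun s : ℂ => K s π a b) σ)
    (hBdiff : ∀ (a : Fin n) (b : Fin m), DifferentiableAt ℂ (fun s : ℂ => B s π a b) σ)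
    (hCdiff : ∀ (a : Fin p) (b : Fin n), DifferentiableAt ℂ (fun s : ℂ => C s π a b) σ)
    (hK : IsUnit (K σ π).det)
    (hKr : IsUnit (Wᵀ * K σ π * V).det)
    (rdir : Fin m → ℂ) (hrdir : rdir ≠ 0)
    (ldir : Fin p → ℂ) (hldir : ldir ≠ 0)
    (hranV : ∃ c : Fin r → ℂ, V *ᵥ c = (K σ π)⁻¹ *ᵥ (B σ π *ᵥ rdir))
    (hranW : ∃ c : Fin r → ℂ, W *ᵥ c = (C σ π * (K σ π)⁻¹)ᵀ *ᵥ ldir) :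
    ldir ⬝ᵥ ((C σ π * (K σ π)⁻¹ * B σ π) *ᵥ rdir)
      = ldir ⬝ᵥ (((C σ π * V) * (Wᵀ * K σ π * V)⁻¹ * (Wᵀ * B σ π)) *ᵥ rdir) ∧
    deriv (fun s : ℂ =>
        ldir ⬝ᵥ ((C s π * (K s π)⁻¹ * B s π) *ᵥ rdir)) σ
      = deriv (fun s : ℂ =>
          ldir ⬝ᵥ (((C s π * V) * (Wᵀ * K s π * V)⁻¹ * (Wᵀ * B s π)) *ᵥ rdir)) σ :=
  parametric_value_and_frequency_derivative_matching_general K B C V W σ π hKdiff hBdiff hCdiff hK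
    hKr rdir ldir hranV hranW
end
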